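/- arXiv:math/0201145 — 6 statements merged into one kernel-verified Lean document; each statement's English description precedes it below -/
import Mathlib

section
/- For all homogeneous x, y, z ∈ H^*(C), the element Θ(x,y,z) lies in Ker(d), i.e. d(Θ(x,y,z)) = 0. -/
/-- `Qmap s q x y` is the cochain `q(x,y) := q(s(x)s(y) - s(xy))`. -/
def Qmap {k C H : Type} [CommRing k] [Ring C] [Algebra k C] [Ring H] [Algebra k H]
    (s : H →ₗ[k] C) (q : C → C) (x y : H) : C :=
  q (s x * s y - s (x * y))

/-- `Theta s q i x y z` is the expression
`Θ(x,y,z) = (-1)^{|x|} s(x) q(y,z) - q(xy,z) + q(x,yz) - q(x,y) s(z)`,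
where `i = |x|` is the degree of `x`. -/
def Theta {k C H : Type} [CommRing k] [Ring C] [Algebra k C] [Ring H] [Algebra k H]
    (s : H →ₗ[k] C) (q : C → C) (i : ℕ) (x y z : H) : C :=
  ((-1 : ℤ) ^ i) • (s x * Qmap s q y z) - Qmap s q (x * y) z
    + Qmap s q x (y * z) - Qmap s q x y * s z

/-- For homogeneous `x, y, z ∈ H^*(C)` the element `Θ(x,y,z)` is a cocycle:
`d Θ(x,y,z) = 0`. -/
theorem Theta_is_cocycle (k : Type) [CommRing k]
    (C : Type) [Ring C] [Algebra k C]
    (𝒜 : ℕ → Submodule k C) [GradedAlgebra 𝒜]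
    (d : C →ₗ[k] C)
    (hd2 : ∀ x : C, d (d x) = 0)
    (hddeg : ∀ (i : ℕ), ∀ x ∈ 𝒜 i, d x ∈ 𝒜 (i + 1))
    (hleib : ∀ (i : ℕ), ∀ x ∈ 𝒜 i, ∀ y : C,
      d (x * y) = d x * y + ((-1 : ℤ) ^ i) • (x * d y))
    (H : Type) [Ring H] [Algebra k H]
    (ℋ : ℕ → Submodule k H) [GradedAlgebra ℋ]
    (π : C → H)
    (hπadd : ∀ x y : C, d x = 0 → d y = 0 → π (x + y) = π x + π y)
    (hπsmul : ∀ (a : k) (x : C), d x = 0 → π (a • x) = a • π x)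
    (hπmul : ∀ x y : C, d x = 0 → d y = 0 → π (x * y) = π x * π y)
    (hπone : π 1 = 1)
    (hπdeg : ∀ (i : ℕ), ∀ x ∈ 𝒜 i, d x = 0 → π x ∈ ℋ i)
    (hπker : ∀ x : C, d x = 0 → (π x = 0 ↔ ∃ y : C, d y = x))
    (hπsurj : ∀ h : H, ∃ x : C, d x = 0 ∧ π x = h)
    (s : H →ₗ[k] C)
    (hs0 : ∀ h : H, d (s h) = 0)
    (hsπ : ∀ h : H, π (s h) = h)
    (hsdeg : ∀ (i : ℕ), ∀ h ∈ ℋ i, s h ∈ 𝒜 i)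
    (q : C → C)
    (hqd : ∀ x : C, (∃ y, d y = x) → d (q x) = x)
    (hqadd : ∀ x y : C, (∃ u, d u = x) → (∃ v, d v = y) → q (x + y) = q x + q y)
    (hqsmul : ∀ (a : k) (x : C), (∃ y, d y = x) → q (a • x) = a • q x)
    (hqdeg : ∀ (i : ℕ), ∀ x : C, (∃ y, d y = x) → x ∈ 𝒜 (i + 1) → q x ∈ 𝒜 i)
    :
    ∀ (i j l : ℕ) (x y z : H), x ∈ ℋ i → y ∈ ℋ j → z ∈ ℋ l →
      d (Theta s q i x y z) = 0 := by
  classical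
  intro i j l x y z hx hy hz
  have hπsub : ∀ a b : C, d a = 0 → d b = 0 → π (a - b) = π a - π b := by
    intro a b ha hb
    have h1 : a - b = a + (-1 : k) • b := by
      rw [neg_one_smul, ← sub_eq_add_neg]
    have hdb : d ((-1 : k) • b) = 0 := by rw [map_smul, hb, smul_zero]
    rw [h1, hπadd a _ ha hdb, hπsmul _ _ hb, neg_one_smul, ← sub_eq_add_neg]
  have hex : ∀ (m : ℕ) (u v : H), u ∈ ℋ m → ∃ w, d w = s u * s v - s (u * v) := by
    intro m u v hu
    have hd1 : d (s u * s v) = 0 := by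
      rw [hleib m (s u) (hsdeg m u hu) (s v), hs0, hs0]; simp
    have hdall : d (s u * s v - s (u * v)) = 0 := by
      rw [map_sub, hd1, hs0, sub_zero]
    rw [← hπker _ hdall, hπsub _ _ hd1 (hs0 _), hπmul _ _ (hs0 u) (hs0 v), hsπ, hsπ, hsπ]
    simp
  have hQd : ∀ (m : ℕ) (u v : H), u ∈ ℋ m → d (Qmap s q u v) = s u * s v - s (u * v) :=
    fun m u v hu => hqd _ (hex m u v hu)
  have hright : ∀ a b : C, d b = 0 → d (a * b) = d a * b := by
    intro a b hb
    conv_lhs => rw [← DirectSum.sum_support_decompose 𝒜 a]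
    conv_rhs => rw [← DirectSum.sum_support_decompose 𝒜 a]
    rw [Finset.sum_mul, map_sum, map_sum, Finset.sum_mul]
    refine Finset.sum_congr rfl fun m _ => ?_
    rw [hleib m _ (SetLike.coe_mem _) b, hb]
    simp
  unfold Theta
  rw [map_sub, map_add, map_sub, map_zsmul]
  rw [hQd (i + j) (x * y) z (SetLike.mul_mem_graded hx hy)]
  rw [hQd i x (y * z) hx]
  rw [hright _ _ (hs0 z), hQd i x y hx]
  rw [hleib i (s x) (hsdeg i x hx) (Qmap s q y z), hs0, hQd j y z hy]
  rw [zero_mul, zero_add, smul_smul, ← pow_add]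
  rw [Even.neg_one_pow ⟨i, rfl⟩, one_smul]
  rw [mul_assoc x y z]
  noncomm_ring
end

section
/- For all homogeneous x, y, z, w ∈ H^*(C), the following identity holds in C: (−1)^{|x|} s(x) Θ(y,z,w) − Θ(xy,z,w) + Θ(x,yz,w) − Θ(x,y,zw) + Θ(x,y,z) s(w) = (−1)^{|x|+|y|} d( q(x,y) q(z,w) ). -/
/-!
Expanding every `Θ`, all terms cancel except the two containing a coboundary
`d q(x,y) = s(x)s(y) - s(xy)`, which leaves
`(-1)^{|x|+|y|} d q(x,y) · q(z,w) - q(x,y) · d q(z,w)`.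
Since `q(x,y)` has degree `|x| + |y| - 1`, the graded Leibniz rule turns this into
`(-1)^{|x|+|y|} d(q(x,y) q(z,w))`. The cocycle `s(x)s(y) - s(xy)` is exact because it maps to
zero in cohomology; when `|x| + |y| = 0` it even vanishes, as `d` raises degree.
-/

theorem decompose_map_zero_eq_zero {k M : Type} [CommRing k] [AddCommGroup M] [Module k M]
    (𝒜 : ℕ → Submodule k M) [DirectSum.Decomposition 𝒜] {d : M →ₗ[k] M}
    (hd : ∀ i, ∀ x ∈ 𝒜 i, d x ∈ 𝒜 (i + 1)) (y : M) :
    (DirectSum.decompose 𝒜 (d y) 0 : M) = 0 := by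
  induction y using DirectSum.Decomposition.inductionOn 𝒜 with
  | zero => simp
  | homogeneous x => exact DirectSum.decompose_of_mem_ne 𝒜 (hd _ _ x.2) (Nat.succ_ne_zero _)
  | add y y' hy hy' => simp [hy, hy']

theorem eq_zero_of_map_mem_zero {k M : Type} [CommRing k] [AddCommGroup M] [Module k M]
    (𝒜 : ℕ → Submodule k M) [DirectSum.Decomposition 𝒜] {d : M →ₗ[k] M}
    (hd : ∀ i, ∀ x ∈ 𝒜 i, d x ∈ 𝒜 (i + 1)) {y : M} (hy : d y ∈ 𝒜 0) : d y = 0 := by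
  rw [← DirectSum.decompose_of_mem_same 𝒜 hy, decompose_map_zero_eq_zero 𝒜 hd]

section

variable {k C H : Type} [CommRing k] [Ring C] [Algebra k C] [Ring H] [Algebra k H]

theorem alternating_sum_Theta (s : H →ₗ[k] C) (q : C → C) (i j : ℕ) (x y z w : H) :
    ((-1 : ℤ) ^ i) • (s x * Theta s q j y z w) - Theta s q (i + j) (x * y) z w
        + Theta s q i x (y * z) w - Theta s q i x y (z * w) + Theta s q i x y z * s w
      = ((-1 : ℤ) ^ (i + j)) • ((s x * s y - s (x * y)) * Qmap s q z w)
        - Qmap s q x y * (s z * s w - s (z * w)) := by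
  simp only [Theta, pow_add, mul_assoc, mul_sub, sub_mul, add_mul, mul_add, smul_sub, smul_add,
    mul_smul_comm, smul_mul_assoc, smul_smul]
  abel

structure IsGradedDerivation (𝒜 : ℕ → Submodule k C) (d : C →ₗ[k] C) : Prop where
  map_mem : ∀ i, ∀ x ∈ 𝒜 i, d x ∈ 𝒜 (i + 1)
  map_mul : ∀ i, ∀ x ∈ 𝒜 i, ∀ y : C, d (x * y) = d x * y + ((-1 : ℤ) ^ i) • (x * d y)

variable {𝒜 : ℕ → Submodule k C} {d : C →ₗ[k] C} {ℋ : ℕ → Submodule k H} {s : H →ₗ[k] C}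
  {q : C → C}

theorem IsGradedDerivation.map_q_mul [DirectSum.Decomposition 𝒜] (hd : IsGradedDerivation 𝒜 d)
    (hqd : ∀ x : C, (∃ y, d y = x) → d (q x) = x)
    (hqsmul : ∀ (a : k) (x : C), (∃ y, d y = x) → q (a • x) = a • q x)
    (hqdeg : ∀ i, ∀ x : C, (∃ y, d y = x) → x ∈ 𝒜 (i + 1) → q x ∈ 𝒜 i)
    {n : ℕ} {b : C} (hb : ∃ u, d u = b) (hbn : b ∈ 𝒜 n) (c : C) :
    d (q b * c) = b * c - ((-1 : ℤ) ^ n) • (q b * d c) := by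
  cases n with
  | zero =>
    obtain ⟨u, rfl⟩ := hb
    have hq0 : q 0 = 0 := by simpa using hqsmul 0 0 ⟨0, map_zero d⟩
    simp [eq_zero_of_map_mem_zero 𝒜 hd.map_mem hbn, hq0]
  | succ n =>
    rw [hd.map_mul n _ (hqdeg n b hb hbn), hqd b hb, pow_succ, mul_neg_one, neg_smul,
      sub_neg_eq_add]

theorem IsGradedDerivation.map_s_mul_sub_s_mul (hd : IsGradedDerivation 𝒜 d)
    (hs0 : ∀ h : H, d (s h) = 0) (hsdeg : ∀ i, ∀ h ∈ ℋ i, s h ∈ 𝒜 i)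
    {i : ℕ} {x : H} (hx : x ∈ ℋ i) (y : H) :
    d (s x * s y - s (x * y)) = 0 := by
  simp [hd.map_mul i (s x) (hsdeg i x hx), hs0]

theorem IsGradedDerivation.exists_map_eq_s_mul_sub_s_mul (hd : IsGradedDerivation 𝒜 d)
    {π : C → H}
    (hπadd : ∀ x y : C, d x = 0 → d y = 0 → π (x + y) = π x + π y)
    (hπmul : ∀ x y : C, d x = 0 → d y = 0 → π (x * y) = π x * π y)
    (hπker : ∀ x : C, d x = 0 → (π x = 0 ↔ ∃ y : C, d y = x))
    (hs0 : ∀ h : H, d (s h) = 0) (hsπ : ∀ h : H, π (s h) = h)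
    (hsdeg : ∀ i, ∀ h ∈ ℋ i, s h ∈ 𝒜 i) {i : ℕ} {x : H} (hx : x ∈ ℋ i) (y : H) :
    ∃ u, d u = s x * s y - s (x * y) := by
  have hclosed := hd.map_s_mul_sub_s_mul hs0 hsdeg hx y
  refine (hπker _ hclosed).mp ?_
  have hsum := hπadd _ _ hclosed (hs0 (x * y))
  rwa [sub_add_cancel, hπmul _ _ (hs0 x) (hs0 y), hsπ, hsπ, hsπ, right_eq_add] at hsum

theorem s_mul_sub_s_mul_mem [SetLike.GradedMonoid 𝒜] [SetLike.GradedMonoid ℋ]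
    (hsdeg : ∀ i, ∀ h ∈ ℋ i, s h ∈ 𝒜 i) {i j : ℕ} {x y : H} (hx : x ∈ ℋ i) (hy : y ∈ ℋ j) :
    s x * s y - s (x * y) ∈ 𝒜 (i + j) :=
  sub_mem (SetLike.mul_mem_graded (hsdeg i x hx) (hsdeg j y hy))
    (hsdeg (i + j) _ (SetLike.mul_mem_graded hx hy))

end

theorem delta_s_Theta_general (k : Type) [CommRing k]
    (C : Type) [Ring C] [Algebra k C]
    (𝒜 : ℕ → Submodule k C) [GradedAlgebra 𝒜]
    (d : C →ₗ[k] C)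
    (hddeg : ∀ (i : ℕ), ∀ x ∈ 𝒜 i, d x ∈ 𝒜 (i + 1))
    (hleib : ∀ (i : ℕ), ∀ x ∈ 𝒜 i, ∀ y : C,
      d (x * y) = d x * y + ((-1 : ℤ) ^ i) • (x * d y))
    (H : Type) [Ring H] [Algebra k H]
    (ℋ : ℕ → Submodule k H) [GradedAlgebra ℋ]
    (π : C → H)
    (hπadd : ∀ x y : C, d x = 0 → d y = 0 → π (x + y) = π x + π y)
    (hπmul : ∀ x y : C, d x = 0 → d y = 0 → π (x * y) = π x * π y)
    (hπker : ∀ x : C, d x = 0 → (π x = 0 ↔ ∃ y : C, d y = x))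
    (s : H →ₗ[k] C)
    (hs0 : ∀ h : H, d (s h) = 0)
    (hsπ : ∀ h : H, π (s h) = h)
    (hsdeg : ∀ (i : ℕ), ∀ h ∈ ℋ i, s h ∈ 𝒜 i)
    (q : C → C)
    (hqd : ∀ x : C, (∃ y, d y = x) → d (q x) = x)
    (hqsmul : ∀ (a : k) (x : C), (∃ y, d y = x) → q (a • x) = a • q x)
    (hqdeg : ∀ (i : ℕ), ∀ x : C, (∃ y, d y = x) → x ∈ 𝒜 (i + 1) → q x ∈ 𝒜 i)
    :
    ∀ (i j l m : ℕ) (x y z w : H), x ∈ ℋ i → y ∈ ℋ j → z ∈ ℋ l → w ∈ ℋ m →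
      ((-1 : ℤ) ^ i) • (s x * Theta s q j y z w) - Theta s q (i + j) (x * y) z w
          + Theta s q i x (y * z) w - Theta s q i x y (z * w)
          + Theta s q i x y z * s w
        = ((-1 : ℤ) ^ (i + j)) • d (Qmap s q x y * Qmap s q z w) := by
  intro i j l m x y z w hx hy hz hw
  have hd : IsGradedDerivation 𝒜 d := ⟨hddeg, hleib⟩
  have hexact {i : ℕ} {x : H} (hx : x ∈ ℋ i) (y : H) :=
    hd.exists_map_eq_s_mul_sub_s_mul hπadd hπmul hπker hs0 hsπ hsdeg hx y
  have hsign : ((-1 : ℤ) ^ (i + j)) * (-1) ^ (i + j) = 1 := by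
    rw [← pow_add]; exact Even.neg_one_pow ⟨_, rfl⟩
  have hdQ : d (Qmap s q z w) = s z * s w - s (z * w) := hqd _ (hexact hz w)
  have hdQmul : d (Qmap s q x y * Qmap s q z w) = (s x * s y - s (x * y)) * Qmap s q z w
      - ((-1 : ℤ) ^ (i + j)) • (Qmap s q x y * d (Qmap s q z w)) :=
    hd.map_q_mul hqd hqsmul hqdeg (hexact hx y) (s_mul_sub_s_mul_mem hsdeg hx hy) _
  rw [alternating_sum_Theta, hdQmul, hdQ, smul_sub, smul_smul, hsign, one_smul]

/-- For homogeneous `x, y, z, w ∈ H^*(C)`,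
`δₛΘ(x,y,z,w) = (-1)^{|x|+|y|} d(q(x,y) q(z,w))` in `C`. -/
theorem delta_s_Theta (k : Type) [CommRing k]
    (C : Type) [Ring C] [Algebra k C]
    (𝒜 : ℕ → Submodule k C) [GradedAlgebra 𝒜]
    (d : C →ₗ[k] C)
    (hd2 : ∀ x : C, d (d x) = 0)
    (hddeg : ∀ (i : ℕ), ∀ x ∈ 𝒜 i, d x ∈ 𝒜 (i + 1))
    (hleib : ∀ (i : ℕ), ∀ x ∈ 𝒜 i, ∀ y : C,
      d (x * y) = d x * y + ((-1 : ℤ) ^ i) • (x * d y))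
    (H : Type) [Ring H] [Algebra k H]
    (ℋ : ℕ → Submodule k H) [GradedAlgebra ℋ]
    (π : C → H)
    (hπadd : ∀ x y : C, d x = 0 → d y = 0 → π (x + y) = π x + π y)
    (hπsmul : ∀ (a : k) (x : C), d x = 0 → π (a • x) = a • π x)
    (hπmul : ∀ x y : C, d x = 0 → d y = 0 → π (x * y) = π x * π y)
    (hπone : π 1 = 1)
    (hπdeg : ∀ (i : ℕ), ∀ x ∈ 𝒜 i, d x = 0 → π x ∈ ℋ i)
    (hπker : ∀ x : C, d x = 0 → (π x = 0 ↔ ∃ y : C, d y = x))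
    (hπsurj : ∀ h : H, ∃ x : C, d x = 0 ∧ π x = h)
    (s : H →ₗ[k] C)
    (hs0 : ∀ h : H, d (s h) = 0)
    (hsπ : ∀ h : H, π (s h) = h)
    (hsdeg : ∀ (i : ℕ), ∀ h ∈ ℋ i, s h ∈ 𝒜 i)
    (q : C → C)
    (hqd : ∀ x : C, (∃ y, d y = x) → d (q x) = x)
    (hqadd : ∀ x y : C, (∃ u, d u = x) → (∃ v, d v = y) → q (x + y) = q x + q y)
    (hqsmul : ∀ (a : k) (x : C), (∃ y, d y = x) → q (a • x) = a • q x)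
    (hqdeg : ∀ (i : ℕ), ∀ x : C, (∃ y, d y = x) → x ∈ 𝒜 (i + 1) → q x ∈ 𝒜 i)
    :
    ∀ (i j l m : ℕ) (x y z w : H), x ∈ ℋ i → y ∈ ℋ j → z ∈ ℋ l → w ∈ ℋ m →
      ((-1 : ℤ) ^ i) • (s x * Theta s q j y z w) - Theta s q (i + j) (x * y) z w
          + Theta s q i x (y * z) w - Theta s q i x y (z * w)
          + Theta s q i x y z * s w
        = ((-1 : ℤ) ^ (i + j)) • d (Qmap s q x y * Qmap s q z w) :=
  delta_s_Theta_general k C 𝒜 d hddeg hleib H ℋ π hπadd hπmul hπker s hs0 hsπ hsdeg q hqd hqsmul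
    hqdeg
end

section
/- The map θ is a Hochschild 3-cocycle of degree −1 of the graded algebra H^*(C) with coefficients in the bimodule with twisted left action: for all homogeneous x, y, z, w ∈ H^*(C), (−1)^{|x|} x·θ(y,z,w) − θ(xy,z,w) + θ(x,yz,w) − θ(x,y,zw) + θ(x,y,z)·w = 0 in H^*(C). -/
/-- `θ = π ∘ Θ` is a Hochschild 3-cocycle of degree `-1` of the graded algebra
`H^*(C)` with coefficients in the bimodule with twisted left action: for homogeneous
`x, y, z, w`,
`(-1)^{|x|} x θ(y,z,w) - θ(xy,z,w) + θ(x,yz,w) - θ(x,y,zw) + θ(x,y,z) w = 0`. -/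
theorem theta_hochschild_cocycle (k : Type) [CommRing k]
    (C : Type) [Ring C] [Algebra k C]
    (𝒜 : ℕ → Submodule k C) [GradedAlgebra 𝒜]
    (d : C →ₗ[k] C)
    (hd2 : ∀ x : C, d (d x) = 0)
    (hddeg : ∀ (i : ℕ), ∀ x ∈ 𝒜 i, d x ∈ 𝒜 (i + 1))
    (hleib : ∀ (i : ℕ), ∀ x ∈ 𝒜 i, ∀ y : C,
      d (x * y) = d x * y + ((-1 : ℤ) ^ i) • (x * d y))
    (H : Type) [Ring H] [Algebra k H]
    (ℋ : ℕ → Submodule k H) [GradedAlgebra ℋ]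
    (π : C → H)
    (hπadd : ∀ x y : C, d x = 0 → d y = 0 → π (x + y) = π x + π y)
    (hπsmul : ∀ (a : k) (x : C), d x = 0 → π (a • x) = a • π x)
    (hπmul : ∀ x y : C, d x = 0 → d y = 0 → π (x * y) = π x * π y)
    (hπone : π 1 = 1)
    (hπdeg : ∀ (i : ℕ), ∀ x ∈ 𝒜 i, d x = 0 → π x ∈ ℋ i)
    (hπker : ∀ x : C, d x = 0 → (π x = 0 ↔ ∃ y : C, d y = x))
    (hπsurj : ∀ h : H, ∃ x : C, d x = 0 ∧ π x = h)
    (s : H →ₗ[k] C)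
    (hs0 : ∀ h : H, d (s h) = 0)
    (hsπ : ∀ h : H, π (s h) = h)
    (hsdeg : ∀ (i : ℕ), ∀ h ∈ ℋ i, s h ∈ 𝒜 i)
    (q : C → C)
    (hqd : ∀ x : C, (∃ y, d y = x) → d (q x) = x)
    (hqadd : ∀ x y : C, (∃ u, d u = x) → (∃ v, d v = y) → q (x + y) = q x + q y)
    (hqsmul : ∀ (a : k) (x : C), (∃ y, d y = x) → q (a • x) = a • q x)
    (hqdeg : ∀ (i : ℕ), ∀ x : C, (∃ y, d y = x) → x ∈ 𝒜 (i + 1) → q x ∈ 𝒜 i)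
    :
    ∀ (i j l m : ℕ) (x y z w : H), x ∈ ℋ i → y ∈ ℋ j → z ∈ ℋ l → w ∈ ℋ m →
      ((-1 : ℤ) ^ i) • (x * π (Theta s q j y z w)) - π (Theta s q (i + j) (x * y) z w)
          + π (Theta s q i x (y * z) w) - π (Theta s q i x y (z * w))
          + π (Theta s q i x y z) * w = 0 := by
  intro i j l m x y z w hx hy hz hw
  have him0 : ∃ u : C, d u = (0 : C) := ⟨0, map_zero d⟩
  have hq0 : q 0 = 0 := by
    have h := hqadd 0 0 him0 him0
    rw [add_zero] at h
    exact left_eq_add.mp h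
  -- a degree-zero element of the image of `d` is zero
  have hdeg0 : ∀ c : C, c ∈ 𝒜 0 → (∃ u, d u = c) → c = 0 := by
    rintro c hc ⟨u, rfl⟩
    classical
    have key : (DirectSum.decompose 𝒜 (d u) 0 : C) = d u :=
      DirectSum.decompose_of_mem_same 𝒜 hc
    have h2 : d u = ∑ n ∈ DFinsupp.support (DirectSum.decompose 𝒜 u),
        d (DirectSum.decompose 𝒜 u n : C) := by
      conv_lhs => rw [← DirectSum.sum_support_decompose 𝒜 u]
      exact map_sum d _ _
    rw [← key]
    calc (DirectSum.decompose 𝒜 (d u) 0 : C)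
        = ∑ n ∈ DFinsupp.support (DirectSum.decompose 𝒜 u),
            (DirectSum.decompose 𝒜 (d (DirectSum.decompose 𝒜 u n : C)) 0 : C) := by
          rw [h2, DirectSum.decompose_sum, DFinsupp.finset_sum_apply,
            AddSubmonoidClass.coe_finset_sum]
      _ = 0 := by
          apply Finset.sum_eq_zero
          intro n _
          exact DirectSum.decompose_of_mem_ne 𝒜 (hddeg n _ (SetLike.coe_mem _))
            (Nat.succ_ne_zero n)
  -- basic facts about `d` on products of sections
  have hssker : ∀ (p : ℕ) (a : H), a ∈ ℋ p → ∀ b : H, d (s a * s b) = 0 := by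
    intro p a ha b
    rw [hleib p (s a) (hsdeg p a ha) (s b), hs0, hs0, zero_mul, mul_zero, smul_zero,
      add_zero]
  have hrker : ∀ (p : ℕ) (a : H), a ∈ ℋ p → ∀ b : H, d (s a * s b - s (a * b)) = 0 := by
    intro p a ha b
    rw [map_sub, hssker p a ha b, hs0, sub_zero]
  have hrim : ∀ (p : ℕ) (a : H), a ∈ ℋ p → ∀ b : H, ∃ u, d u = s a * s b - s (a * b) := by
    intro p a ha b
    apply (hπker _ (hrker p a ha b)).mp
    have h1 : s a * s b - s (a * b) = s a * s b + (-1 : k) • s (a * b) := by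
      rw [neg_one_smul, ← sub_eq_add_neg]
    rw [h1, hπadd _ _ (hssker p a ha b) (by rw [map_smul, hs0, smul_zero]),
      hπmul _ _ (hs0 a) (hs0 b), hπsmul _ _ (hs0 _), hsπ, hsπ, hsπ, neg_one_smul]
    exact add_neg_cancel _
  have hdQ : ∀ (p : ℕ) (a : H), a ∈ ℋ p → ∀ b : H,
      d (Qmap s q a b) = s a * s b - s (a * b) := by
    intro p a ha b
    exact hqd _ (hrim p a ha b)
  have hrmem : ∀ (p r : ℕ) (a b : H), a ∈ ℋ p → b ∈ ℋ r →
      s a * s b - s (a * b) ∈ 𝒜 (p + r) := by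
    intro p r a b ha hb
    exact sub_mem (SetLike.mul_mem_graded (hsdeg p a ha) (hsdeg r b hb))
      (hsdeg (p + r) _ (SetLike.mul_mem_graded ha hb))
  have hQ0 : ∀ (p r : ℕ) (a b : H), a ∈ ℋ p → b ∈ ℋ r → p + r = 0 →
      s a * s b - s (a * b) = 0 ∧ Qmap s q a b = 0 := by
    intro p r a b ha hb hpr
    have h1 : s a * s b - s (a * b) = 0 := by
      apply hdeg0
      · have h := hrmem p r a b ha hb; rwa [hpr] at h
      · exact hrim p a ha b
    refine ⟨h1, ?_⟩
    show q (s a * s b - s (a * b)) = 0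
    rw [h1, hq0]
  have hQmem : ∀ (p r n : ℕ) (a b : H), a ∈ ℋ p → b ∈ ℋ r → p + r = n + 1 →
      Qmap s q a b ∈ 𝒜 n := by
    intro p r n a b ha hb hpr
    apply hqdeg n _ (hrim p a ha b)
    have h := hrmem p r a b ha hb; rwa [hpr] at h
  have hQmul : ∀ (p r : ℕ) (a b : H), a ∈ ℋ p → b ∈ ℋ r → ∀ c : C, d c = 0 →
      d (Qmap s q a b * c) = (s a * s b - s (a * b)) * c := by
    intro p r a b ha hb c hc
    rcases hn : p + r with _ | n
    · obtain ⟨h1, h2⟩ := hQ0 p r a b ha hb hn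
      simp [h1, h2]
    · rw [hleib n _ (hQmem p r n a b ha hb hn) c, hdQ p a ha b, hc, mul_zero,
        smul_zero, add_zero]
  -- each Theta is a cocycle
  have hTker : ∀ (p r t : ℕ) (a b c : H), a ∈ ℋ p → b ∈ ℋ r → c ∈ ℋ t →
      d (Theta s q p a b c) = 0 := by
    intro p r t a b c ha hb hc
    show d (((-1 : ℤ) ^ p) • (s a * Qmap s q b c) - Qmap s q (a * b) c
      + Qmap s q a (b * c) - Qmap s q a b * s c) = 0
    rw [map_sub, map_add, map_sub, map_zsmul,
      hleib p (s a) (hsdeg p a ha) _, hs0, zero_mul, zero_add,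
      hdQ r b hb c, smul_smul, ← pow_add, Even.neg_one_pow ⟨p, rfl⟩, one_smul,
      hdQ (p + r) (a * b) (SetLike.mul_mem_graded ha hb) c,
      hdQ p a ha (b * c),
      hQmul p r a b ha hb (s c) (hs0 c), mul_assoc a b c]
    noncomm_ring
  have hπzsmul : ∀ (n : ℤ) (c : C), d c = 0 → π (n • c) = n • π c := by
    intro n c hc
    rw [← Int.cast_smul_eq_zsmul k, hπsmul _ _ hc, Int.cast_smul_eq_zsmul]
  have hπsub : ∀ a b : C, d a = 0 → d b = 0 → π (a - b) = π a - π b := by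
    intro a b ha hb
    have h1 : a - b = a + (-1 : k) • b := by rw [neg_one_smul, ← sub_eq_add_neg]
    rw [h1, hπadd _ _ ha (by rw [map_smul, hb, smul_zero]), hπsmul _ _ hb,
      neg_one_smul, ← sub_eq_add_neg]
  -- memberships
  have hxy : x * y ∈ ℋ (i + j) := SetLike.mul_mem_graded hx hy
  have hyz : y * z ∈ ℋ (j + l) := SetLike.mul_mem_graded hy hz
  have hzw : z * w ∈ ℋ (l + m) := SetLike.mul_mem_graded hz hw
  have hT1 := hTker j l m y z w hy hz hw
  have hT2 := hTker (i + j) l m (x * y) z w hxy hz hw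
  have hT3 := hTker i (j + l) m x (y * z) w hx hyz hw
  have hT4 := hTker i j (l + m) x y (z * w) hx hy hzw
  have hT5 := hTker i j l x y z hx hy hz
  set T1 := Theta s q j y z w with hT1def
  set T2 := Theta s q (i + j) (x * y) z w with hT2def
  set T3 := Theta s q i x (y * z) w with hT3def
  set T4 := Theta s q i x y (z * w) with hT4def
  set T5 := Theta s q i x y z with hT5def
  set u1 := ((-1 : ℤ) ^ i) • (s x * T1) with hu1def
  set u5 := T5 * s w with hu5def
  -- the key algebraic identity
  have hA : u1 - T2 + T3 - T4 + u5
      = ((-1 : ℤ) ^ (i + j)) • ((s x * s y - s (x * y)) * Qmap s q z w)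
        - Qmap s q x y * (s z * s w - s (z * w)) := by
    rw [hu1def, hu5def, hT1def, hT2def, hT3def, hT4def, hT5def]
    simp only [Theta]
    rw [mul_assoc x y z, mul_assoc y z w, pow_add]
    rcases Nat.even_or_odd i with hi | hi <;> rcases Nat.even_or_odd j with hj | hj <;>
      simp only [hi.neg_one_pow, hj.neg_one_pow, one_mul, mul_one, one_smul,
        neg_one_mul, mul_neg_one, neg_neg, neg_one_zsmul, neg_smul] <;>
      noncomm_ring
  -- the right-hand side is a coboundary
  have hB : ∃ B : C, d B = ((-1 : ℤ) ^ (i + j)) • ((s x * s y - s (x * y)) * Qmap s q z w)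
      - Qmap s q x y * (s z * s w - s (z * w)) := by
    rcases hn : i + j with _ | n
    · obtain ⟨h1, h2⟩ := hQ0 i j x y hx hy hn
      refine ⟨0, ?_⟩
      rw [map_zero, h1, h2]
      simp
    · refine ⟨((-1 : ℤ) ^ (n + 1)) • (Qmap s q x y * Qmap s q z w), ?_⟩
      have hsgn : ((-1 : ℤ)) ^ (n + 1 + n) = -1 := Odd.neg_one_pow ⟨n, by ring⟩
      rw [map_zsmul, hleib n _ (hQmem i j n x y hx hy hn) _, hdQ i x hx y,
        hdQ l z hz w, smul_add, smul_smul, ← pow_add, hsgn, neg_one_zsmul,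
        ← sub_eq_add_neg]
  obtain ⟨B, hBeq⟩ := hB
  -- kernel facts for the five summands
  have hdsx1 : d (s x * T1) = 0 := by
    rw [hleib i (s x) (hsdeg i x hx) _, hs0, hT1, zero_mul, mul_zero, smul_zero,
      add_zero]
  have hdu1 : d u1 = 0 := by rw [hu1def, map_zsmul, hdsx1, smul_zero]
  have hdu5 : d u5 = 0 := by
    have h5 : u5 = d B - u1 + T2 - T3 + T4 := by
      rw [hBeq, ← hA]; abel
    rw [h5, map_add, map_sub, map_add, map_sub, hd2, hdu1, hT2, hT3, hT4]
    abel
  have k1 : d (u1 - T2) = 0 := by rw [map_sub, hdu1, hT2, sub_zero]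
  have k2 : d (u1 - T2 + T3) = 0 := by rw [map_add, k1, hT3, add_zero]
  have k3 : d (u1 - T2 + T3 - T4) = 0 := by rw [map_sub, k2, hT4, sub_zero]
  have k4 : d (u1 - T2 + T3 - T4 + u5) = 0 := by rw [map_add, k3, hdu5, add_zero]
  -- rewrite the goal as π of a single element
  have e1 : x * π T1 = π (s x * T1) := by rw [hπmul _ _ (hs0 x) hT1, hsπ]
  have e5 : π T5 * w = π u5 := by rw [hu5def, hπmul _ _ hT5 (hs0 w), hsπ]
  rw [e1, e5, ← hπzsmul _ _ hdsx1, ← hu1def, ← hπsub u1 T2 hdu1 hT2,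
    ← hπadd _ _ k1 hT3, ← hπsub _ _ k2 hT4, ← hπadd _ _ k3 hdu5]
  rw [hA, ← hBeq]
  exact (hπker _ (by rw [hd2])).mpr ⟨B, rfl⟩
end

section
/- The Hochschild cohomology class of θ is independent of the choices of sections: if (s, q) and (s′, q′) are two pairs of graded k-linear sections with associated 3-cocycles θ and θ′, then there exists a graded k-linear map a : H^*(C) ⊗ H^*(C) → H^*(C) of degree −1 such that for all homogeneous x, y, z ∈ H^*(C): θ′(x,y,z) − θ(x,y,z) = (−1)^{|x|} x·a(y,z) − a(xy,z) + a(x,yz) − a(x,y)·z. -/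
/-- The Hochschild cohomology class `[θ]` does not depend on the choice of the
sections `s` and `q`: the cocycles `θ'` and `θ` associated to two pairs of sections
differ by the Hochschild coboundary of a graded `k`-bilinear map of degree `-1`. -/
theorem theta_class_independent (k : Type) [CommRing k]
    (C : Type) [Ring C] [Algebra k C]
    (𝒜 : ℕ → Submodule k C) [GradedAlgebra 𝒜]
    (d : C →ₗ[k] C)
    (hd2 : ∀ x : C, d (d x) = 0)
    (hddeg : ∀ (i : ℕ), ∀ x ∈ 𝒜 i, d x ∈ 𝒜 (i + 1))
    (hleib : ∀ (i : ℕ), ∀ x ∈ 𝒜 i, ∀ y : C,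
      d (x * y) = d x * y + ((-1 : ℤ) ^ i) • (x * d y))
    (H : Type) [Ring H] [Algebra k H]
    (ℋ : ℕ → Submodule k H) [GradedAlgebra ℋ]
    (π : C → H)
    (hπadd : ∀ x y : C, d x = 0 → d y = 0 → π (x + y) = π x + π y)
    (hπsmul : ∀ (a : k) (x : C), d x = 0 → π (a • x) = a • π x)
    (hπmul : ∀ x y : C, d x = 0 → d y = 0 → π (x * y) = π x * π y)
    (hπone : π 1 = 1)
    (hπdeg : ∀ (i : ℕ), ∀ x ∈ 𝒜 i, d x = 0 → π x ∈ ℋ i)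
    (hπker : ∀ x : C, d x = 0 → (π x = 0 ↔ ∃ y : C, d y = x))
    (hπsurj : ∀ h : H, ∃ x : C, d x = 0 ∧ π x = h)
    (s : H →ₗ[k] C)
    (hs0 : ∀ h : H, d (s h) = 0)
    (hsπ : ∀ h : H, π (s h) = h)
    (hsdeg : ∀ (i : ℕ), ∀ h ∈ ℋ i, s h ∈ 𝒜 i)
    (q : C → C)
    (hqd : ∀ x : C, (∃ y, d y = x) → d (q x) = x)
    (hqadd : ∀ x y : C, (∃ u, d u = x) → (∃ v, d v = y) → q (x + y) = q x + q y)
    (hqsmul : ∀ (a : k) (x : C), (∃ y, d y = x) → q (a • x) = a • q x)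
    (hqdeg : ∀ (i : ℕ), ∀ x : C, (∃ y, d y = x) → x ∈ 𝒜 (i + 1) → q x ∈ 𝒜 i)
    (s' : H →ₗ[k] C)
    (hs0' : ∀ h : H, d (s' h) = 0)
    (hsπ' : ∀ h : H, π (s' h) = h)
    (hsdeg' : ∀ (i : ℕ), ∀ h ∈ ℋ i, s' h ∈ 𝒜 i)
    (q' : C → C)
    (hqd' : ∀ x : C, (∃ y, d y = x) → d (q' x) = x)
    (hqadd' : ∀ x y : C, (∃ u, d u = x) → (∃ v, d v = y) → q' (x + y) = q' x + q' y)
    (hqsmul' : ∀ (a : k) (x : C), (∃ y, d y = x) → q' (a • x) = a • q' x)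
    (hqdeg' : ∀ (i : ℕ), ∀ x : C, (∃ y, d y = x) → x ∈ 𝒜 (i + 1) → q' x ∈ 𝒜 i)
    :
    ∃ a : H →ₗ[k] H →ₗ[k] H,
      (∀ (i j : ℕ), ∀ x ∈ ℋ i, ∀ y ∈ ℋ j, a x y ∈ ℋ (i + j - 1)) ∧
      ∀ (i j l : ℕ) (x y z : H), x ∈ ℋ i → y ∈ ℋ j → z ∈ ℋ l →
        π (Theta s' q' i x y z) - π (Theta s q i x y z)
          = ((-1 : ℤ) ^ i) • (x * a y z) - a (x * y) z + a x (y * z) - a x y * z := by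
  classical
  -- zero values
  have hq0 : q 0 = 0 := by
    have h := hqsmul 0 0 ⟨0, map_zero d⟩
    simpa using h
  have hq0' : q' 0 = 0 := by
    have h := hqsmul' 0 0 ⟨0, map_zero d⟩
    simpa using h
  -- π on differences and integer multiples
  have hπsub : ∀ a b : C, d a = 0 → d b = 0 → π (a - b) = π a - π b := by
    intro a b ha hb
    have hb' : d ((-1 : k) • b) = 0 := by rw [map_smul, hb, smul_zero]
    have h1 : a - b = a + (-1 : k) • b := by rw [neg_one_smul, ← sub_eq_add_neg]
    rw [h1, hπadd a _ ha hb', hπsmul _ _ hb, neg_one_smul, ← sub_eq_add_neg]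
  have hπz : ∀ (n : ℤ) (a : C), d a = 0 → π (n • a) = n • π a := by
    intro n a ha
    rw [← Int.cast_smul_eq_zsmul k n a, hπsmul _ _ ha, Int.cast_smul_eq_zsmul]
  have hexact : ∀ c : C, d c = 0 → π c = 0 → ∃ w, d w = c :=
    fun c h1 h2 => (hπker c h1).1 h2
  -- Leibniz with closed right factor, for arbitrary left factor
  have hleib0 : ∀ a b : C, d b = 0 → d (a * b) = d a * b := by
    intro a b hb
    rw [← DirectSum.sum_support_decompose 𝒜 a, Finset.sum_mul, map_sum, map_sum, Finset.sum_mul]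
    exact Finset.sum_congr rfl fun m _ => by
      rw [hleib m _ (SetLike.coe_mem _) b, hb, mul_zero, smul_zero, add_zero]
  -- exact elements of degree 0 vanish
  have hdeg0 : ∀ c : C, c ∈ 𝒜 0 → (∃ w, d w = c) → c = 0 := by
    rintro c hc ⟨w, hw⟩
    have h2 : (DirectSum.decompose 𝒜 c 0 : C) = c := DirectSum.decompose_of_mem_same 𝒜 hc
    have h3 : (DirectSum.decompose 𝒜 c 0 : C) = 0 := by
      rw [← hw, ← DirectSum.sum_support_decompose 𝒜 w, map_sum, DirectSum.decompose_sum,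
        DFinsupp.finset_sum_apply, AddSubmonoidClass.coe_finset_sum]
      exact Finset.sum_eq_zero fun m _ =>
        DirectSum.decompose_of_mem_ne 𝒜 (hddeg m _ (SetLike.coe_mem _)) (Nat.succ_ne_zero m)
    rw [← h2, h3]
  -- sign square fact
  have hsq : ∀ n : ℕ, ((-1 : ℤ) ^ n) * ((-1 : ℤ) ^ n) = 1 := by
    intro n; rw [← mul_pow]; norm_num
  -- Leibniz facts for s, s'
  have hsleib : ∀ (i : ℕ) (x : H), x ∈ ℋ i → ∀ b : C,
      d (s x * b) = ((-1 : ℤ) ^ i) • (s x * d b) := by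
    intro i x hx b; rw [hleib i _ (hsdeg i x hx), hs0, zero_mul, zero_add]
  have hsleib' : ∀ (i : ℕ) (x : H), x ∈ ℋ i → ∀ b : C,
      d (s' x * b) = ((-1 : ℤ) ^ i) • (s' x * d b) := by
    intro i x hx b; rw [hleib i _ (hsdeg' i x hx), hs0', zero_mul, zero_add]
  -- generalized Leibniz for elements of degree `m - 1` vanishing if `m = 0`
  have hgl : ∀ (m : ℕ) (c : C), c ∈ 𝒜 (m - 1) → (m = 0 → c = 0) → ∀ b : C,
      d (c * b) = d c * b + ((-1 : ℤ) ^ (m + 1)) • (c * d b) := by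
    intro m c hc h0 b
    cases m with
    | zero => rw [h0 rfl]; simp
    | succ n =>
      have he : ((-1 : ℤ) ^ (n + 1 + 1)) = (-1 : ℤ) ^ n := by
        rw [pow_succ, pow_succ, mul_neg_one, mul_neg_one, neg_neg]
      rw [he]
      exact hleib n c hc b
  -- generic facts about `Qmap`
  have hQgen : ∀ (σ : H →ₗ[k] C) (ρ : C → C),
      (∀ h, d (σ h) = 0) → (∀ h, π (σ h) = h) → (∀ i, ∀ h ∈ ℋ i, σ h ∈ 𝒜 i) →
      (∀ c : C, (∃ w, d w = c) → d (ρ c) = c) →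
      (∀ c c' : C, (∃ w, d w = c) → (∃ w, d w = c') → ρ (c + c') = ρ c + ρ c') →
      (∀ (a : k) (c : C), (∃ w, d w = c) → ρ (a • c) = a • ρ c) →
      (∀ (i : ℕ) (c : C), (∃ w, d w = c) → c ∈ 𝒜 (i + 1) → ρ c ∈ 𝒜 i) →
      (ρ 0 = 0) →
      (∀ x y : H, (∃ w, d w = σ x * σ y - σ (x * y)))
      ∧ (∀ x y : H, d (Qmap σ ρ x y) = σ x * σ y - σ (x * y))
      ∧ (∀ x x' y : H, Qmap σ ρ (x + x') y = Qmap σ ρ x y + Qmap σ ρ x' y)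
      ∧ (∀ x y y' : H, Qmap σ ρ x (y + y') = Qmap σ ρ x y + Qmap σ ρ x y')
      ∧ (∀ (a : k) (x y : H), Qmap σ ρ (a • x) y = a • Qmap σ ρ x y)
      ∧ (∀ (a : k) (x y : H), Qmap σ ρ x (a • y) = a • Qmap σ ρ x y)
      ∧ (∀ (i j : ℕ) (x y : H), x ∈ ℋ i → y ∈ ℋ j → Qmap σ ρ x y ∈ 𝒜 (i + j - 1))
      ∧ (∀ x y : H, x ∈ ℋ 0 → y ∈ ℋ 0 → Qmap σ ρ x y = 0) := by
    intro σ ρ hσ0 hσπ hσdeg hρd hρadd hρsmul hρdeg hρ0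
    have hdprod : ∀ x y : H, d (σ x * σ y - σ (x * y)) = 0 := by
      intro x y
      rw [map_sub, hleib0 _ _ (hσ0 y), hσ0, zero_mul, hσ0, sub_zero]
    have hmem : ∀ x y : H, ∃ w, d w = σ x * σ y - σ (x * y) := by
      intro x y
      refine hexact _ (hdprod x y) ?_
      rw [hπsub _ _ (by rw [hleib0 _ _ (hσ0 y), hσ0, zero_mul]) (hσ0 _),
        hπmul _ _ (hσ0 x) (hσ0 y), hσπ, hσπ, hσπ, sub_self]
    have hdQ : ∀ x y : H, d (Qmap σ ρ x y) = σ x * σ y - σ (x * y) :=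
      fun x y => hρd _ (hmem x y)
    have hQzero : ∀ x y : H, x ∈ ℋ 0 → y ∈ ℋ 0 → Qmap σ ρ x y = 0 := by
      intro x y hx hy
      have h1 : σ x * σ y - σ (x * y) = 0 := by
        refine hdeg0 _ ?_ (hmem x y)
        exact Submodule.sub_mem _ (SetLike.mul_mem_graded (hσdeg 0 x hx) (hσdeg 0 y hy))
          (hσdeg 0 _ (SetLike.mul_mem_graded hx hy))
      show ρ _ = 0
      rw [h1, hρ0]
    refine ⟨hmem, hdQ, ?_, ?_, ?_, ?_, ?_, hQzero⟩
    · intro x x' y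
      show ρ _ = ρ _ + ρ _
      rw [show σ (x + x') * σ y - σ ((x + x') * y)
          = (σ x * σ y - σ (x * y)) + (σ x' * σ y - σ (x' * y)) by
        rw [map_add, add_mul, add_mul, map_add]; abel]
      exact hρadd _ _ (hmem x y) (hmem x' y)
    · intro x y y'
      show ρ _ = ρ _ + ρ _
      rw [show σ x * σ (y + y') - σ (x * (y + y'))
          = (σ x * σ y - σ (x * y)) + (σ x * σ y' - σ (x * y')) by
        rw [map_add, mul_add, mul_add, map_add]; abel]
      exact hρadd _ _ (hmem x y) (hmem x y')
    · intro a x y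
      show ρ _ = a • ρ _
      rw [show σ (a • x) * σ y - σ ((a • x) * y) = a • (σ x * σ y - σ (x * y)) by
        simp only [map_smul, smul_mul_assoc, smul_sub]]
      exact hρsmul a _ (hmem x y)
    · intro a x y
      show ρ _ = a • ρ _
      rw [show σ x * σ (a • y) - σ (x * (a • y)) = a • (σ x * σ y - σ (x * y)) by
        simp only [map_smul, mul_smul_comm, smul_sub]]
      exact hρsmul a _ (hmem x y)
    · intro i j x y hx hy
      have hmem2 : σ x * σ y - σ (x * y) ∈ 𝒜 (i + j) :=
        Submodule.sub_mem _ (SetLike.mul_mem_graded (hσdeg i x hx) (hσdeg j y hy))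
          (hσdeg (i + j) _ (SetLike.mul_mem_graded hx hy))
      rcases Nat.eq_zero_or_eq_succ_pred (i + j) with h0 | hsucc
      · have hi : i = 0 := by omega
        have hj : j = 0 := by omega
        subst hi; subst hj
        rw [hQzero x y hx hy]
        exact Submodule.zero_mem _
      · have hm : i + j - 1 + 1 = i + j := by omega
        · refine hρdeg (i + j - 1) _ (hmem x y) ?_
          rw [hm]; exact hmem2
  obtain ⟨humem, hdQ, hQaddl, hQaddr, hQsmull, hQsmulr, hQdeg, hQzero⟩ :=
    hQgen s q hs0 hsπ hsdeg hqd hqadd hqsmul hqdeg hq0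
  obtain ⟨humem', hdQ', hQaddl', hQaddr', hQsmull', hQsmulr', hQdeg', hQzero'⟩ :=
    hQgen s' q' hs0' hsπ' hsdeg' hqd' hqadd' hqsmul' hqdeg' hq0'
  -- Θ is a cocycle
  have hdTheta : ∀ (σ : H →ₗ[k] C) (ρ : C → C),
      (∀ h, d (σ h) = 0) → (∀ i, ∀ h ∈ ℋ i, σ h ∈ 𝒜 i) →
      (∀ x y : H, d (Qmap σ ρ x y) = σ x * σ y - σ (x * y)) →
      ∀ (i : ℕ) (x y z : H), x ∈ ℋ i → d (Theta σ ρ i x y z) = 0 := by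
    intro σ ρ hσ0 hσdeg hdQσ i x y z hx
    show d (((-1 : ℤ) ^ i) • (σ x * Qmap σ ρ y z) - Qmap σ ρ (x * y) z
      + Qmap σ ρ x (y * z) - Qmap σ ρ x y * σ z) = 0
    rw [map_sub, map_add, map_sub, map_zsmul,
      hleib i _ (hσdeg i x hx), hσ0, zero_mul, zero_add, hdQσ, smul_smul, hsq, one_smul,
      hdQσ, hdQσ, hleib0 _ _ (hσ0 z), hdQσ, mul_assoc x y z]
    noncomm_ring
  -- the homotopy t
  have hsubmem : ∀ h : H, ∃ w, d w = s' h - s h := by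
    intro h
    refine hexact _ ?_ ?_
    · rw [map_sub, hs0, hs0', sub_zero]
    · rw [hπsub _ _ (hs0' h) (hs0 h), hsπ, hsπ', sub_self]
  set t : H → C := fun h => q (s' h - s h) with ht
  have hdt : ∀ h, d (t h) = s' h - s h := fun h => hqd _ (hsubmem h)
  have ht0 : ∀ h ∈ ℋ 0, t h = 0 := by
    intro h hh
    have h1 : s' h - s h = 0 :=
      hdeg0 _ (Submodule.sub_mem _ (hsdeg' 0 h hh) (hsdeg 0 h hh)) (hsubmem h)
    show q _ = 0
    rw [h1, hq0]
  have htadd : ∀ h1 h2 : H, t (h1 + h2) = t h1 + t h2 := by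
    intro h1 h2
    show q _ = q _ + q _
    rw [show s' (h1 + h2) - s (h1 + h2) = (s' h1 - s h1) + (s' h2 - s h2) by
      rw [map_add, map_add]; abel]
    exact hqadd _ _ (hsubmem h1) (hsubmem h2)
  have htsmul : ∀ (a : k) (h : H), t (a • h) = a • t h := by
    intro a h
    show q _ = a • q _
    rw [show s' (a • h) - s (a • h) = a • (s' h - s h) by
      simp only [map_smul, smul_sub]]
    exact hqsmul a _ (hsubmem h)
  have htdeg : ∀ i, ∀ h ∈ ℋ i, t h ∈ 𝒜 (i - 1) := by
    intro i h hh
    cases i with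
    | zero => rw [ht0 h hh]; exact Submodule.zero_mem _
    | succ n =>
      exact hqdeg n _ (hsubmem h)
        (Submodule.sub_mem _ (hsdeg' _ h hh) (hsdeg _ h hh))
  -- the correcting cochain F
  set F : ℕ → H → H → C := fun n u v =>
    Qmap s' q' u v - Qmap s q u v - ((-1 : ℤ) ^ n) • (s u * t v) - t u * s' v + t (u * v)
    with hF
  have hdF : ∀ (i : ℕ) (x : H), x ∈ ℋ i → ∀ y : H, d (F i x y) = 0 := by
    intro i x hx y
    show d (Qmap s' q' x y - Qmap s q x y - ((-1 : ℤ) ^ i) • (s x * t y)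
      - t x * s' y + t (x * y)) = 0
    rw [map_add, map_sub, map_sub, map_sub, map_zsmul, hdQ', hdQ,
      hsleib i x hx, hdt, smul_smul, hsq, one_smul,
      hleib0 _ _ (hs0' y), hdt, hdt]
    noncomm_ring
  have hFaddl : ∀ (n : ℕ) (x x' y : H), F n (x + x') y = F n x y + F n x' y := by
    intro n x x' y
    show Qmap s' q' (x + x') y - Qmap s q (x + x') y - ((-1 : ℤ) ^ n) • (s (x + x') * t y)
        - t (x + x') * s' y + t ((x + x') * y)
      = (Qmap s' q' x y - Qmap s q x y - ((-1 : ℤ) ^ n) • (s x * t y) - t x * s' y + t (x * y))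
        + (Qmap s' q' x' y - Qmap s q x' y - ((-1 : ℤ) ^ n) • (s x' * t y)
          - t x' * s' y + t (x' * y))
    rw [hQaddl', hQaddl, map_add, add_mul, htadd, add_mul, add_mul, htadd, smul_add]
    abel
  have hFaddr : ∀ (n : ℕ) (x y y' : H), F n x (y + y') = F n x y + F n x y' := by
    intro n x y y'
    show Qmap s' q' x (y + y') - Qmap s q x (y + y') - ((-1 : ℤ) ^ n) • (s x * t (y + y'))
        - t x * s' (y + y') + t (x * (y + y'))
      = (Qmap s' q' x y - Qmap s q x y - ((-1 : ℤ) ^ n) • (s x * t y) - t x * s' y + t (x * y))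
        + (Qmap s' q' x y' - Qmap s q x y' - ((-1 : ℤ) ^ n) • (s x * t y') - t x * s' y'
          + t (x * y'))
    rw [hQaddr', hQaddr, htadd, mul_add, map_add, mul_add, mul_add, htadd, smul_add]
    abel
  have hFsmull : ∀ (n : ℕ) (a : k) (x y : H), F n (a • x) y = a • F n x y := by
    intro n a x y
    show Qmap s' q' (a • x) y - Qmap s q (a • x) y - ((-1 : ℤ) ^ n) • (s (a • x) * t y)
        - t (a • x) * s' y + t ((a • x) * y)
      = a • (Qmap s' q' x y - Qmap s q x y - ((-1 : ℤ) ^ n) • (s x * t y) - t x * s' y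
        + t (x * y))
    simp only [hQsmull', hQsmull, map_smul, smul_mul_assoc, htsmul,
      smul_comm ((-1 : ℤ) ^ n) a, smul_sub, smul_add]
  have hFsmulr : ∀ (n : ℕ) (a : k) (x y : H), F n x (a • y) = a • F n x y := by
    intro n a x y
    show Qmap s' q' x (a • y) - Qmap s q x (a • y) - ((-1 : ℤ) ^ n) • (s x * t (a • y))
        - t x * s' (a • y) + t (x * (a • y))
      = a • (Qmap s' q' x y - Qmap s q x y - ((-1 : ℤ) ^ n) • (s x * t y) - t x * s' y
        + t (x * y))
    simp only [hQsmulr', hQsmulr, map_smul, htsmul, mul_smul_comm,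
      smul_comm ((-1 : ℤ) ^ n) a, smul_sub, smul_add]
  -- the bilinear map on each graded piece
  let φ : ∀ n : ℕ, (ℋ n) →ₗ[k] H →ₗ[k] H := fun n =>
    LinearMap.mk₂' k k (fun (u : ℋ n) (v : H) => π (F n (u : H) v))
      (fun u1 u2 v => by
        show π (F n ((u1 : H) + (u2 : H)) v) = π (F n (u1 : H) v) + π (F n (u2 : H) v)
        rw [hFaddl]
        exact hπadd _ _ (hdF n _ u1.2 v) (hdF n _ u2.2 v))
      (fun c u v => by
        show π (F n (c • (u : H)) v) = c • π (F n (u : H) v)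
        rw [hFsmull]
        exact hπsmul _ _ (hdF n _ u.2 v))
      (fun u v1 v2 => by
        show π (F n (u : H) (v1 + v2)) = π (F n (u : H) v1) + π (F n (u : H) v2)
        rw [hFaddr]
        exact hπadd _ _ (hdF n _ u.2 v1) (hdF n _ u.2 v2))
      (fun c u v => by
        show π (F n (u : H) (c • v)) = c • π (F n (u : H) v)
        rw [hFsmulr]
        exact hπsmul _ _ (hdF n _ u.2 v))
  refine ⟨LinearMap.comp (DirectSum.toModule k ℕ (H →ₗ[k] H) φ)
    (DirectSum.decomposeLinearEquiv ℋ).toLinearMap, ?_, ?_⟩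
  all_goals {
    have haeval : ∀ (n : ℕ) (x : H), x ∈ ℋ n → ∀ y : H,
        (LinearMap.comp (DirectSum.toModule k ℕ (H →ₗ[k] H) φ)
          (DirectSum.decomposeLinearEquiv ℋ).toLinearMap) x y = π (F n x y) := by
      intro n x hx y
      show DirectSum.toModule k ℕ (H →ₗ[k] H) φ ((DirectSum.decomposeLinearEquiv ℋ) x) y = _
      rw [DirectSum.decomposeLinearEquiv_apply, DirectSum.decompose_of_mem ℋ hx,
        ← DirectSum.lof_eq_of k, DirectSum.toModule_lof]
      rfl
    first
    | -- degree statement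
      (intro i j x hx y hy
       rw [haeval i x hx y]
       refine hπdeg _ _ ?_ (hdF i x hx y)
       show Qmap s' q' x y - Qmap s q x y - ((-1 : ℤ) ^ i) • (s x * t y) - t x * s' y + t (x * y)
         ∈ 𝒜 (i + j - 1)
       refine Submodule.add_mem _ (Submodule.sub_mem _ (Submodule.sub_mem _
         (Submodule.sub_mem _ (hQdeg' i j x y hx hy) (hQdeg i j x y hx hy)) ?_) ?_)
         (htdeg (i + j) _ (SetLike.mul_mem_graded hx hy))
       · cases j with
         | zero => rw [ht0 y hy, mul_zero, smul_zero]; exact Submodule.zero_mem _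
         | succ m =>
           refine zsmul_mem ?_ _
           have h1 : s x * t y ∈ 𝒜 (i + m) :=
             SetLike.mul_mem_graded (hsdeg i x hx) (htdeg (m + 1) y hy)
           have h2 : i + (m + 1) - 1 = i + m := by omega
           rw [h2]; exact h1
       · cases i with
         | zero => rw [ht0 x hx, zero_mul]; exact Submodule.zero_mem _
         | succ m =>
           have h1 : t x * s' y ∈ 𝒜 (m + j) :=
             SetLike.mul_mem_graded (htdeg (m + 1) x hx) (hsdeg' j y hy)
           have h2 : m + 1 + j - 1 = m + j := by omega
           rw [h2]; exact h1)
    | -- main identity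
      (intro i j l x y z hx hy hz
       have hxy : x * y ∈ ℋ (i + j) := SetLike.mul_mem_graded hx hy
       have hyz : y * z ∈ ℋ (j + l) := SetLike.mul_mem_graded hy hz
       rw [haeval j y hy z, haeval (i + j) (x * y) hxy z, haeval i x hx (y * z),
         haeval i x hx y]
       have hFy := hdF j y hy z
       have hFxy := hdF (i + j) (x * y) hxy z
       have hFyz := hdF i x hx (y * z)
       have hFv := hdF i x hx y
       set R : C := ((-1 : ℤ) ^ i) • (s x * F j y z) - F (i + j) (x * y) z + F i x (y * z)
         - F i x y * s z with hR
       have hdA : d (s x * F j y z) = 0 := by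
         rw [hleib0 _ _ hFy, hs0, zero_mul]
       have hdA' : d (((-1 : ℤ) ^ i) • (s x * F j y z)) = 0 := by
         rw [map_zsmul, hdA, smul_zero]
       have hdD : d (F i x y * s z) = 0 := by
         rw [hleib0 _ _ (hs0 z), hFv, zero_mul]
       have hdAB : d (((-1 : ℤ) ^ i) • (s x * F j y z) - F (i + j) (x * y) z) = 0 := by
         rw [map_sub, hdA', hFxy, sub_zero]
       have hdABC : d (((-1 : ℤ) ^ i) • (s x * F j y z) - F (i + j) (x * y) z
           + F i x (y * z)) = 0 := by
         rw [map_add, hdAB, hFyz, add_zero]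
       have hdR : d R = 0 := by
         rw [hR, map_sub, hdABC, hdD, sub_zero]
       have hπR : π R = ((-1 : ℤ) ^ i) • (x * π (F j y z)) - π (F (i + j) (x * y) z)
           + π (F i x (y * z)) - π (F i x y) * z := by
         rw [hR, hπsub _ _ hdABC hdD, hπadd _ _ hdAB hFyz, hπsub _ _ hdA' hFxy,
           hπz _ _ hdA, hπmul _ _ (hs0 x) hFy, hsπ, hπmul _ _ hFv (hs0 z), hsπ]
       rw [← hπR]
       have hdΘ2 := hdTheta s' q' hs0' hsdeg' hdQ' i x y z hx
       have hdΘ1 := hdTheta s q hs0 hsdeg hdQ i x y z hx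
       rw [← hπsub _ _ hdΘ2 hdΘ1]
       -- exactness of the difference
       set W : C := ((-1 : ℤ) ^ i) • (t x * Qmap s' q' y z)
         + ((-1 : ℤ) ^ (i + j)) • (Qmap s' q' x y * t z)
         - ((-1 : ℤ) ^ (i + j)) • (t x * (s' y * t z))
         - ((-1 : ℤ) ^ j) • (s x * (t y * t z))
         + ((-1 : ℤ) ^ (i + j)) • (t (x * y) * t z) with hW
       have ht0x : i = 0 → t x = 0 := fun h => ht0 x (h ▸ hx)
       have ht0y : j = 0 → t y = 0 := fun h => ht0 y (h ▸ hy)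
       have ht0xy : i + j = 0 → t (x * y) = 0 := fun h => ht0 _ (h ▸ hxy)
       have hQ2xy0 : i + j = 0 → Qmap s' q' x y = 0 := by
         intro h
         have hi : i = 0 := by omega
         have hj : j = 0 := by omega
         exact hQzero' x y (hi ▸ hx) (hj ▸ hy)
       have hE1 : d (t x * Qmap s' q' y z)
           = (s' x - s x) * Qmap s' q' y z
             + ((-1 : ℤ) ^ (i + 1)) • (t x * (s' y * s' z - s' (y * z))) := by
         rw [hgl i (t x) (htdeg i x hx) ht0x, hdt, hdQ']
       have hE2 : d (Qmap s' q' x y * t z)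
           = (s' x * s' y - s' (x * y)) * t z
             + ((-1 : ℤ) ^ (i + j + 1)) • (Qmap s' q' x y * (s' z - s z)) := by
         rw [hgl (i + j) _ (hQdeg' i j x y hx hy) hQ2xy0, hdQ', hdt]
       have hE3 : d (t x * (s' y * t z))
           = (s' x - s x) * (s' y * t z)
             + ((-1 : ℤ) ^ (i + 1)) • (((-1 : ℤ) ^ j) • (t x * (s' y * (s' z - s z)))) := by
         rw [hgl i (t x) (htdeg i x hx) ht0x, hdt, hsleib' j y hy, hdt, mul_smul_comm]
       have hE4 : d (s x * (t y * t z))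
           = ((-1 : ℤ) ^ i) • (s x * ((s' y - s y) * t z
             + ((-1 : ℤ) ^ (j + 1)) • (t y * (s' z - s z)))) := by
         rw [hsleib i x hx, hgl j (t y) (htdeg j y hy) ht0y, hdt, hdt]
       have hkey : Theta s' q' i x y z - Theta s q i x y z - R = d W := by
         rw [hW, map_add, map_sub, map_sub, map_add, map_zsmul, map_zsmul, map_zsmul,
           map_zsmul, map_zsmul, hE1, hE2, hE3, hE4,
           hgl (i + j) _ (htdeg (i + j) _ hxy) ht0xy, hdt, hdt, hR]
         show ((((-1 : ℤ) ^ i) • (s' x * Qmap s' q' y z) - Qmap s' q' (x * y) z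
             + Qmap s' q' x (y * z) - Qmap s' q' x y * s' z)
           - (((-1 : ℤ) ^ i) • (s x * Qmap s q y z) - Qmap s q (x * y) z
             + Qmap s q x (y * z) - Qmap s q x y * s z))
           - (((-1 : ℤ) ^ i) • (s x *
               (Qmap s' q' y z - Qmap s q y z - ((-1 : ℤ) ^ j) • (s y * t z)
                 - t y * s' z + t (y * z)))
             - (Qmap s' q' (x * y) z - Qmap s q (x * y) z
               - ((-1 : ℤ) ^ (i + j)) • (s (x * y) * t z) - t (x * y) * s' z + t ((x * y) * z))
             + (Qmap s' q' x (y * z) - Qmap s q x (y * z)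
               - ((-1 : ℤ) ^ i) • (s x * t (y * z)) - t x * s' (y * z) + t (x * (y * z)))
             - (Qmap s' q' x y - Qmap s q x y - ((-1 : ℤ) ^ i) • (s x * t y)
               - t x * s' y + t (x * y)) * s z) = _
         rw [mul_assoc x y z]
         rcases Nat.even_or_odd i with hi | hi <;> rcases Nat.even_or_odd j with hj | hj <;>
           simp only [pow_add, pow_succ, hi.neg_one_pow, hj.neg_one_pow, one_mul, mul_one,
             neg_mul, mul_neg, neg_neg, one_smul, neg_smul, smul_neg, neg_one_zsmul] <;>
           noncomm_ring
       have hfin : π (Theta s' q' i x y z - Theta s q i x y z - R) = 0 := by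
         rw [hkey]
         exact (hπker _ (hd2 W)).2 ⟨W, rfl⟩
       have hsplit : π (Theta s' q' i x y z - Theta s q i x y z - R)
           = π (Theta s' q' i x y z - Theta s q i x y z) - π R :=
         hπsub _ _ (by rw [map_sub, hdΘ2, hdΘ1, sub_zero]) hdR
       exact sub_eq_zero.mp (hsplit.symm.trans hfin)) }
end

section
/- For a Massey triple of homogeneous elements x, y, z ∈ H^*(C) (i.e. xy = 0 and yz = 0), the class of the Massey triple product θ(x,y,z) in the quotient H^*(C)/(x·H^*(C) + H^*(C)·z) is independent of the choice of sections: if (s, q) and (s′, q′) are two pairs of graded k-linear sections with associated θ and θ′, then θ′(x,y,z) − θ(x,y,z) ∈ x·H^*(C) + H^*(C)·z. -/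
/-!
Since `x y = y z = 0`, `Θ` is the Massey cochain `(-1)^|x| a P - R c` of the representatives
`a = s x`, `b = s y`, `c = s z` and the defining system `d R = a b`, `d P = b c`. Replacing
`c`, `b`, `a` in turn by cohomologous cocycles `c + dγ`, `b + dβ`, `a + dα` and correcting the
defining system by `± b γ`, `β c`, `± a β`, `α b` changes this cochain only by a coboundary.
Two defining systems of the same triple differ by cocycles `g`, `h`, and change the cochain by
`a g - h c`, whose class lies in `x H + H z`.
-/

open DirectSum

theorem neg_one_pow_mul_self {R : Type*} [Monoid R] [HasDistribNeg R] (n : ℕ) :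
    (-1 : R) ^ n * (-1) ^ n = 1 := by
  rw [← pow_add, ← two_mul, pow_mul, neg_one_sq, one_pow]

section DGAlgebra

variable {C F σ : Type*} [Ring C] [FunLike F C C]

/-- `HasLeibnizSign d (-(-1) ^ n) a` stands in for "`a` is homogeneous of degree `n - 1`", which
would need a truncated subtraction at `n = 0`. -/
def HasLeibnizSign (d : F) (ε : ℤ) (a : C) : Prop :=
  ∀ u : C, d (a * u) = d a * u + ε • (a * d u)

theorem hasLeibnizSign_zero [AddMonoidHomClass F C C] (d : F) (ε : ℤ) :
    HasLeibnizSign d ε (0 : C) := fun u => by simp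

structure IsDGDifferential [SetLike σ C] (𝒜 : ℕ → σ) (d : F) : Prop where
  map_map : ∀ x, d (d x) = 0
  map_mem : ∀ i, ∀ x ∈ 𝒜 i, d x ∈ 𝒜 (i + 1)
  leibniz : ∀ i, ∀ x ∈ 𝒜 i, HasLeibnizSign d ((-1) ^ i) x

namespace IsDGDifferential

variable [SetLike σ C] {𝒜 : ℕ → σ} {d : F}

theorem map_mul_of_mem_of_map_eq_zero (hd : IsDGDifferential 𝒜 d) {i : ℕ} {a : C}
    (ha : a ∈ 𝒜 i) (hda : d a = 0) (u : C) : d (a * u) = (-1 : ℤ) ^ i • (a * d u) := by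
  rw [hd.leibniz i a ha u, hda, zero_mul, zero_add]

variable [AddMonoidHomClass F C C] [AddSubmonoidClass σ C] [Decomposition 𝒜]

theorem map_mul_of_map_eq_zero (hd : IsDGDifferential 𝒜 d) {w : C} (hw : d w = 0) (u : C) :
    d (u * w) = d u * w := by
  induction u using Decomposition.inductionOn 𝒜 with
  | zero => simp
  | homogeneous m => rw [hd.leibniz _ _ m.2 w, hw, mul_zero, smul_zero, add_zero]
  | add u₁ u₂ h₁ h₂ => rw [add_mul, map_add, map_add, h₁, h₂, add_mul]

theorem map_eq_zero_of_mem_zero (hd : IsDGDifferential 𝒜 d) {v : C} (hv : d v ∈ 𝒜 0) :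
    d v = 0 := by
  have hproj : ∀ v : C, (decompose 𝒜 (d v) 0 : C) = 0 := by
    intro v
    induction v using Decomposition.inductionOn 𝒜 with
    | zero => simp
    | homogeneous m => exact decompose_of_mem_ne 𝒜 (hd.map_mem _ _ m.2) (Nat.succ_ne_zero _)
    | add u₁ u₂ h₁ h₂ => simp [decompose_add, h₁, h₂]
  rw [← decompose_of_mem_same 𝒜 hv, hproj]

theorem hasLeibnizSign_of_exact (hd : IsDGDifferential 𝒜 d) {q : C → C} (hq0 : q 0 = 0)
    (hqdeg : ∀ (i : ℕ), ∀ x : C, (∃ y, d y = x) → x ∈ 𝒜 (i + 1) → q x ∈ 𝒜 i)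
    {n : ℕ} {w : C} (hw : w ∈ 𝒜 n) (hex : ∃ v, d v = w) :
    HasLeibnizSign d (-(-1) ^ n) (q w) := by
  cases n with
  | zero =>
    obtain ⟨v, rfl⟩ := hex
    rw [hd.map_eq_zero_of_mem_zero hw, hq0]
    exact hasLeibnizSign_zero d _
  | succ m =>
    rw [pow_succ, mul_neg_one, neg_neg]
    exact hd.leibniz m _ (hqdeg m w hex hw)

end IsDGDifferential

variable [AddMonoidHomClass F C C]

structure IsDefiningSystem (d : F) (a b c R P : C) : Prop where
  map_left : d R = a * b
  map_right : d P = b * c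

def masseyCochain (i : ℕ) (a c R P : C) : C :=
  (-1 : ℤ) ^ i • (a * P) - R * c

theorem masseyCochain_eq_add (i : ℕ) (a c R P R' P' : C) :
    masseyCochain i a c R' P' =
      masseyCochain i a c R P + (a * ((-1 : ℤ) ^ i • (P' - P)) - (R' - R) * c) := by
  simp only [masseyCochain, mul_smul_comm, mul_sub, sub_mul, smul_sub]
  abel

theorem masseyCochain_perturb_middle (i : ℕ) (a c R P β : C) :
    masseyCochain i a c (R + (-1 : ℤ) ^ i • (a * β)) (P + β * c) = masseyCochain i a c R P := by
  simp only [masseyCochain, mul_add, smul_add, add_mul, smul_mul_assoc, mul_assoc]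
  abel

namespace IsDefiningSystem

variable {d : F} {i j : ℕ} {a b c R P : C}

theorem perturb_right (hsys : IsDefiningSystem d a b c R P)
    (hb : ∀ u, d (b * u) = (-1 : ℤ) ^ j • (b * d u)) (γ : C) :
    IsDefiningSystem d a b (c + d γ) R (P + (-1 : ℤ) ^ j • (b * γ)) where
  map_left := hsys.map_left
  map_right := by
    rw [map_add, map_zsmul, hb, smul_smul, neg_one_pow_mul_self, one_smul, hsys.map_right, mul_add]

theorem masseyCochain_perturb_right (hsys : IsDefiningSystem d a b c R P)
    (hR : HasLeibnizSign d (-(-1) ^ (i + j)) R) (γ : C) :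
    masseyCochain i a (c + d γ) R (P + (-1 : ℤ) ^ j • (b * γ)) =
      masseyCochain i a c R P + d ((-1 : ℤ) ^ (i + j) • (R * γ)) := by
  rw [map_zsmul, hR γ, hsys.map_left]
  simp only [masseyCochain, mul_add, smul_add, mul_smul_comm, smul_smul, neg_smul, smul_neg,
    neg_one_pow_mul_self, one_smul, mul_assoc]
  rw [← pow_add]
  abel

theorem perturb_middle (hsys : IsDefiningSystem d a b c R P)
    (ha : ∀ u, d (a * u) = (-1 : ℤ) ^ i • (a * d u)) (hc : ∀ u, d (u * c) = d u * c) (β : C) :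
    IsDefiningSystem d a (b + d β) c (R + (-1 : ℤ) ^ i • (a * β)) (P + β * c) where
  map_left := by
    rw [map_add, map_zsmul, ha, smul_smul, neg_one_pow_mul_self, one_smul, hsys.map_left, mul_add]
  map_right := by rw [map_add, hc, hsys.map_right, add_mul]

theorem perturb_left (hsys : IsDefiningSystem d a b c R P) {α : C}
    (hα : HasLeibnizSign d (-(-1) ^ i) α) (hdb : d b = 0) :
    IsDefiningSystem d (a + d α) b c (R + α * b) P where
  map_left := by rw [map_add, hα, hdb, mul_zero, smul_zero, add_zero, hsys.map_left, add_mul]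
  map_right := hsys.map_right

theorem masseyCochain_perturb_left (hsys : IsDefiningSystem d a b c R P) {α : C}
    (hα : HasLeibnizSign d (-(-1) ^ i) α) :
    masseyCochain i (a + d α) c (R + α * b) P =
      masseyCochain i a c R P + d ((-1 : ℤ) ^ i • (α * P)) := by
  rw [map_zsmul, hα P, hsys.map_right]
  simp only [masseyCochain, add_mul, smul_add, smul_smul, neg_smul, smul_neg,
    neg_one_pow_mul_self, one_smul, mul_assoc]
  abel

theorem map_masseyCochain (hsys : IsDefiningSystem d a b c R P)
    (ha : ∀ u, d (a * u) = (-1 : ℤ) ^ i • (a * d u)) (hc : ∀ u, d (u * c) = d u * c) :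
    d (masseyCochain i a c R P) = 0 := by
  rw [masseyCochain, map_sub, map_zsmul, ha, hc, hsys.map_right, hsys.map_left, smul_smul,
    neg_one_pow_mul_self, one_smul, mul_assoc, sub_self]

end IsDefiningSystem

theorem exists_masseyCochain_eq_add [SetLike σ C] [AddSubmonoidClass σ C] {𝒜 : ℕ → σ}
    [Decomposition 𝒜] {d : F} (hd : IsDGDifferential 𝒜 d) {i j : ℕ}
    {a b c R P a' b' c' R' P' α β γ : C} (ha : a ∈ 𝒜 i) (hda : d a = 0) (hb : b ∈ 𝒜 j)
    (hdb : d b = 0) (hdc : d c = 0) (hsys : IsDefiningSystem d a b c R P)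
    (hR : HasLeibnizSign d (-(-1) ^ (i + j)) R) (hsys' : IsDefiningSystem d a' b' c' R' P')
    (hα : HasLeibnizSign d (-(-1) ^ i) α) (hdα : d α = a' - a) (hdβ : d β = b' - b)
    (hdγ : d γ = c' - c) :
    ∃ S g h : C, d g = 0 ∧ d h = 0 ∧
      masseyCochain i a' c' R' P' = masseyCochain i a c R P + d S + (a' * g - h * c') := by
  obtain rfl : a' = a + d α := by rw [hdα, add_sub_cancel]
  obtain rfl : b' = b + d β := by rw [hdβ, add_sub_cancel]
  obtain rfl : c' = c + d γ := by rw [hdγ, add_sub_cancel]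
  have hdc' : d (c + d γ) = 0 := by rw [map_add, hdc, hd.map_map, add_zero]
  have hdb' : d (b + d β) = 0 := by rw [map_add, hdb, hd.map_map, add_zero]
  have hsys₁ := hsys.perturb_right (hd.map_mul_of_mem_of_map_eq_zero hb hdb) γ
  have hsys₂ := hsys₁.perturb_middle (hd.map_mul_of_mem_of_map_eq_zero ha hda)
    (hd.map_mul_of_map_eq_zero hdc') β
  have hsys₃ := hsys₂.perturb_left hα hdb'
  set P₂ := P + (-1 : ℤ) ^ j • (b * γ) + β * (c + d γ)
  set R₃ := R + (-1 : ℤ) ^ i • (a * β) + α * (b + d β)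
  refine ⟨(-1 : ℤ) ^ (i + j) • (R * γ) + (-1 : ℤ) ^ i • (α * P₂), (-1 : ℤ) ^ i • (P' - P₂),
    R' - R₃, ?_, ?_, ?_⟩
  · rw [map_zsmul, map_sub, hsys'.map_right, hsys₃.map_right, sub_self, smul_zero]
  · rw [map_sub, hsys'.map_left, hsys₃.map_left, sub_self]
  · rw [masseyCochain_eq_add, hsys₂.masseyCochain_perturb_left hα,
      masseyCochain_perturb_middle, hsys.masseyCochain_perturb_right hR, map_add]
    abel

end DGAlgebra

structure IsCohomologyProjection {C H F : Type*} [Ring C] [Mul H] [Add H] [Zero H]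
    [FunLike F C C] (d : F) (π : C → H) : Prop where
  map_add : ∀ x y, d x = 0 → d y = 0 → π (x + y) = π x + π y
  map_mul : ∀ x y, d x = 0 → d y = 0 → π (x * y) = π x * π y
  map_eq_zero_iff : ∀ x, d x = 0 → (π x = 0 ↔ ∃ y, d y = x)

namespace IsCohomologyProjection

variable {C H F σ : Type*} [Ring C] [Ring H] [FunLike F C C] [AddMonoidHomClass F C C]
  {d : F} {π : C → H}

theorem map_sub (hπ : IsCohomologyProjection d π) {x y : C} (hx : d x = 0) (hy : d y = 0) :
    π (x - y) = π x - π y := by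
  rw [eq_sub_iff_add_eq, ← hπ.map_add _ _ (by rw [_root_.map_sub, hx, hy, sub_self]) hy,
    sub_add_cancel]

theorem exists_map_eq_sub (hπ : IsCohomologyProjection d π) {x y : C} (hx : d x = 0)
    (hy : d y = 0) (h : π x = π y) : ∃ w, d w = x - y :=
  (hπ.map_eq_zero_iff _ (by rw [_root_.map_sub, hx, hy, sub_self])).mp
    (by rw [hπ.map_sub hx hy, h, sub_self])

variable [SetLike σ C] [AddSubmonoidClass σ C] {𝒜 : ℕ → σ} [Decomposition 𝒜]

theorem exists_map_eq_mul (hπ : IsCohomologyProjection d π) (hd : IsDGDifferential 𝒜 d)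
    {x y : C} (hx : d x = 0) (hy : d y = 0) (h : π x * π y = 0) : ∃ w, d w = x * y :=
  (hπ.map_eq_zero_iff _ (by rw [hd.map_mul_of_map_eq_zero hy, hx, zero_mul])).mp
    (by rw [hπ.map_mul _ _ hx hy, h])

theorem exists_sub_eq_mul_add_mul (hπ : IsCohomologyProjection d π)
    (hd : IsDGDifferential 𝒜 d) {a c g h M M' S : C} (hda : d a = 0) (hdc : d c = 0)
    (hdg : d g = 0) (hdh : d h = 0) (hM : d M = 0) (hM' : M' = M + d S + (a * g - h * c)) :
    ∃ u v, π M' - π M = π a * u + v * π c := by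
  have hag : d (a * g) = 0 := by rw [hd.map_mul_of_map_eq_zero hdg, hda, zero_mul]
  have hhc : d (h * c) = 0 := by rw [hd.map_mul_of_map_eq_zero hdc, hdh, zero_mul]
  have hX : d (a * g - h * c) = 0 := by rw [_root_.map_sub, hag, hhc, sub_self]
  have hdS : d (d S) = 0 := hd.map_map S
  have hM'0 : d M' = 0 := by
    rw [hM', _root_.map_add, _root_.map_add, hM, hdS, hX, add_zero, add_zero]
  refine ⟨π g, -π h, ?_⟩
  rw [← hπ.map_sub hM'0 hM, hM', add_assoc, add_sub_cancel_left, hπ.map_add _ _ hdS hX,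
    (hπ.map_eq_zero_iff _ hdS).mpr ⟨S, rfl⟩, zero_add, hπ.map_sub hag hhc,
    hπ.map_mul _ _ hda hdg, hπ.map_mul _ _ hdh hdc, neg_mul, sub_eq_add_neg]

end IsCohomologyProjection

section Sections

variable {k C H : Type} {F σ : Type*} [CommRing k] [Ring C] [Algebra k C] [Ring H] [Algebra k H]

theorem theta_eq_masseyCochain {s : H →ₗ[k] C} {q : C → C} (hq0 : q 0 = 0) (i : ℕ) {x y z : H}
    (hxy : x * y = 0) (hyz : y * z = 0) :
    Theta s q i x y z = masseyCochain i (s x) (s z) (q (s x * s y)) (q (s y * s z)) := by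
  simp [Theta, Qmap, masseyCochain, hxy, hyz, hq0]

variable [FunLike F C C] [AddMonoidHomClass F C C] [SetLike σ C] [AddSubmonoidClass σ C]
  {𝒜 : ℕ → σ} [Decomposition 𝒜] {d : F}

theorem IsCohomologyProjection.isDefiningSystem {π : C → H}
    (hπ : IsCohomologyProjection d π) (hd : IsDGDifferential 𝒜 d) {s : H →ₗ[k] C}
    (hs0 : ∀ h, d (s h) = 0) (hsπ : ∀ h, π (s h) = h) {q : C → C}
    (hqd : ∀ x : C, (∃ y, d y = x) → d (q x) = x) {x y z : H} (hxy : x * y = 0)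
    (hyz : y * z = 0) :
    IsDefiningSystem d (s x) (s y) (s z) (q (s x * s y)) (q (s y * s z)) where
  map_left := hqd _ (hπ.exists_map_eq_mul hd (hs0 x) (hs0 y) (by rw [hsπ, hsπ, hxy]))
  map_right := hqd _ (hπ.exists_map_eq_mul hd (hs0 y) (hs0 z) (by rw [hsπ, hsπ, hyz]))

end Sections

theorem massey_product_independent_general (k : Type) [CommRing k]
    (C : Type) [Ring C] [Algebra k C]
    (𝒜 : ℕ → Submodule k C) [GradedAlgebra 𝒜]
    (d : C →ₗ[k] C)
    (hd2 : ∀ x : C, d (d x) = 0)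
    (hddeg : ∀ (i : ℕ), ∀ x ∈ 𝒜 i, d x ∈ 𝒜 (i + 1))
    (hleib : ∀ (i : ℕ), ∀ x ∈ 𝒜 i, ∀ y : C,
      d (x * y) = d x * y + ((-1 : ℤ) ^ i) • (x * d y))
    (H : Type) [Ring H] [Algebra k H]
    (ℋ : ℕ → Submodule k H)
    (π : C → H)
    (hπadd : ∀ x y : C, d x = 0 → d y = 0 → π (x + y) = π x + π y)
    (hπmul : ∀ x y : C, d x = 0 → d y = 0 → π (x * y) = π x * π y)
    (hπker : ∀ x : C, d x = 0 → (π x = 0 ↔ ∃ y : C, d y = x))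
    (s : H →ₗ[k] C)
    (hs0 : ∀ h : H, d (s h) = 0)
    (hsπ : ∀ h : H, π (s h) = h)
    (hsdeg : ∀ (i : ℕ), ∀ h ∈ ℋ i, s h ∈ 𝒜 i)
    (q : C → C)
    (hqd : ∀ x : C, (∃ y, d y = x) → d (q x) = x)
    (hqsmul : ∀ (a : k) (x : C), (∃ y, d y = x) → q (a • x) = a • q x)
    (hqdeg : ∀ (i : ℕ), ∀ x : C, (∃ y, d y = x) → x ∈ 𝒜 (i + 1) → q x ∈ 𝒜 i)
    (s' : H →ₗ[k] C)
    (hs0' : ∀ h : H, d (s' h) = 0)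
    (hsπ' : ∀ h : H, π (s' h) = h)
    (hsdeg' : ∀ (i : ℕ), ∀ h ∈ ℋ i, s' h ∈ 𝒜 i)
    (q' : C → C)
    (hqd' : ∀ x : C, (∃ y, d y = x) → d (q' x) = x)
    (hqsmul' : ∀ (a : k) (x : C), (∃ y, d y = x) → q' (a • x) = a • q' x)
    :
    ∀ (i j l : ℕ) (x y z : H), x ∈ ℋ i → y ∈ ℋ j → z ∈ ℋ l →
      x * y = 0 → y * z = 0 →
      ∃ u v : H, π (Theta s' q' i x y z) - π (Theta s q i x y z) = x * u + v * z := by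
  intro i j l x y z hx hy hz hxy hyz
  have hd : IsDGDifferential 𝒜 d := ⟨hd2, hddeg, hleib⟩
  have hπ : IsCohomologyProjection d π := ⟨hπadd, hπmul, hπker⟩
  have hq0 : q 0 = 0 := by simpa using hqsmul 0 0 ⟨0, map_zero d⟩
  have hq0' : q' 0 = 0 := by simpa using hqsmul' 0 0 ⟨0, map_zero d⟩
  have hsys := hπ.isDefiningSystem hd hs0 hsπ hqd hxy hyz
  have hsys' := hπ.isDefiningSystem hd hs0' hsπ' hqd' hxy hyz
  have hexact : ∀ w, ∃ v, d v = s' w - s w := fun w =>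
    hπ.exists_map_eq_sub (hs0' w) (hs0 w) (by rw [hsπ, hsπ'])
  obtain ⟨β, hβ⟩ := hexact y
  obtain ⟨γ, hγ⟩ := hexact z
  have hR := hd.hasLeibnizSign_of_exact hq0 hqdeg
    (SetLike.mul_mem_graded (hsdeg i x hx) (hsdeg j y hy)) ⟨_, hsys.map_left⟩
  have hα := hd.hasLeibnizSign_of_exact hq0 hqdeg
    (sub_mem (hsdeg' i x hx) (hsdeg i x hx)) (hexact x)
  obtain ⟨S, g, h, hg, hh, hM⟩ := exists_masseyCochain_eq_add hd (hsdeg i x hx) (hs0 x)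
    (hsdeg j y hy) (hs0 y) (hs0 z) hsys hR hsys' hα (hqd _ (hexact x)) hβ hγ
  have hM0 := hsys.map_masseyCochain (hd.map_mul_of_mem_of_map_eq_zero (hsdeg i x hx) (hs0 x))
    (hd.map_mul_of_map_eq_zero (hs0 z))
  rw [theta_eq_masseyCochain hq0 i hxy hyz, theta_eq_masseyCochain hq0' i hxy hyz]
  simpa only [hsπ'] using hπ.exists_sub_eq_mul_add_mul hd (hs0' x) (hs0' z) hg hh hM0 hM

/-- For a Massey triple of homogeneous elements `x, y, z ∈ H^*(C)` (`xy = 0`,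
`yz = 0`), the class of the Massey triple product `θ(x,y,z)` in
`H^*(C)/(x H^*(C) + H^*(C) z)` does not depend on the choice of the sections. -/
theorem massey_product_independent (k : Type) [CommRing k]
    (C : Type) [Ring C] [Algebra k C]
    (𝒜 : ℕ → Submodule k C) [GradedAlgebra 𝒜]
    (d : C →ₗ[k] C)
    (hd2 : ∀ x : C, d (d x) = 0)
    (hddeg : ∀ (i : ℕ), ∀ x ∈ 𝒜 i, d x ∈ 𝒜 (i + 1))
    (hleib : ∀ (i : ℕ), ∀ x ∈ 𝒜 i, ∀ y : C,
      d (x * y) = d x * y + ((-1 : ℤ) ^ i) • (x * d y))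
    (H : Type) [Ring H] [Algebra k H]
    (ℋ : ℕ → Submodule k H) [GradedAlgebra ℋ]
    (π : C → H)
    (hπadd : ∀ x y : C, d x = 0 → d y = 0 → π (x + y) = π x + π y)
    (hπsmul : ∀ (a : k) (x : C), d x = 0 → π (a • x) = a • π x)
    (hπmul : ∀ x y : C, d x = 0 → d y = 0 → π (x * y) = π x * π y)
    (hπone : π 1 = 1)
    (hπdeg : ∀ (i : ℕ), ∀ x ∈ 𝒜 i, d x = 0 → π x ∈ ℋ i)
    (hπker : ∀ x : C, d x = 0 → (π x = 0 ↔ ∃ y : C, d y = x))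
    (hπsurj : ∀ h : H, ∃ x : C, d x = 0 ∧ π x = h)
    (s : H →ₗ[k] C)
    (hs0 : ∀ h : H, d (s h) = 0)
    (hsπ : ∀ h : H, π (s h) = h)
    (hsdeg : ∀ (i : ℕ), ∀ h ∈ ℋ i, s h ∈ 𝒜 i)
    (q : C → C)
    (hqd : ∀ x : C, (∃ y, d y = x) → d (q x) = x)
    (hqadd : ∀ x y : C, (∃ u, d u = x) → (∃ v, d v = y) → q (x + y) = q x + q y)
    (hqsmul : ∀ (a : k) (x : C), (∃ y, d y = x) → q (a • x) = a • q x)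
    (hqdeg : ∀ (i : ℕ), ∀ x : C, (∃ y, d y = x) → x ∈ 𝒜 (i + 1) → q x ∈ 𝒜 i)
    (s' : H →ₗ[k] C)
    (hs0' : ∀ h : H, d (s' h) = 0)
    (hsπ' : ∀ h : H, π (s' h) = h)
    (hsdeg' : ∀ (i : ℕ), ∀ h ∈ ℋ i, s' h ∈ 𝒜 i)
    (q' : C → C)
    (hqd' : ∀ x : C, (∃ y, d y = x) → d (q' x) = x)
    (hqadd' : ∀ x y : C, (∃ u, d u = x) → (∃ v, d v = y) → q' (x + y) = q' x + q' y)
    (hqsmul' : ∀ (a : k) (x : C), (∃ y, d y = x) → q' (a • x) = a • q' x)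
    (hqdeg' : ∀ (i : ℕ), ∀ x : C, (∃ y, d y = x) → x ∈ 𝒜 (i + 1) → q' x ∈ 𝒜 i)
    :
    ∀ (i j l : ℕ) (x y z : H), x ∈ ℋ i → y ∈ ℋ j → z ∈ ℋ l →
      x * y = 0 → y * z = 0 →
      ∃ u v : H, π (Theta s' q' i x y z) - π (Theta s q i x y z) = x * u + v * z :=
  massey_product_independent_general k C 𝒜 d hd2 hddeg hleib H ℋ π hπadd hπmul hπker s hs0 hsπ hsdeg
    q hqd hqsmul hqdeg s' hs0' hsπ' hsdeg' q' hqd' hqsmul'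
end

section
/- Let c ∈ H^*(C) be homogeneous, let x ∈ H^*(C) be homogeneous with cx = 0, and let y ∈ H^*(C) be homogeneous. Then in cone(l_{s(c)}) the following exact identity holds: (−q(c,x), s(x))·s(y) − (−q(c,xy), s(xy)) = (Θ(c,x,y), 0) + (−1)^{|c|−1} D(0, q(x,y)), where the right C-action on the cone is componentwise, (u,v)·w = (uw, vw). In particular, the section σ(x) := [(−q(c,x), s(x))] of H^*(cone(l_{s(c)})) → Ann_{H^*(C)}(c) satisfies: σ(x)·y − σ(xy) equals the image of θ(c,x,y) under the map H^*(C) → H^*(cone(l_{s(c)})) induced by the inclusion C → cone(l_{s(c)}). -/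
/-- The differential of the mapping cone `cone(l_{s(c)})`, where `m = |c|`:
`D(u,v) = (d u + s(c) v, (-1)^{|c|-1} d v)` (note `(-1)^(m+1) = (-1)^(m-1)`). -/
def Dcone {k C H : Type} [CommRing k] [Ring C] [Algebra k C] [Ring H] [Algebra k H]
    (d : C →ₗ[k] C) (s : H →ₗ[k] C) (c : H) (m : ℕ) (p : C × C) : C × C :=
  (d p.1 + s c * p.2, ((-1 : ℤ) ^ (m + 1)) • d p.2)

section PartialAdditive

variable {A B : Type*} [AddGroup A] [AddGroup B] {P : A → Prop} {f : A → B}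

lemma map_zero_of_map_add_on (hadd : ∀ x y, P x → P y → f (x + y) = f x + f y) (h0 : P 0) :
    f 0 = 0 := by
  have h := hadd 0 0 h0 h0
  rwa [add_zero, left_eq_add] at h

lemma map_neg_of_map_add_on (hadd : ∀ x y, P x → P y → f (x + y) = f x + f y) (h0 : P 0)
    {x : A} (hx : P x) (hnx : P (-x)) : f (-x) = -f x := by
  have h := hadd x (-x) hx hnx
  rw [add_neg_cancel, map_zero_of_map_add_on hadd h0] at h
  exact eq_neg_of_add_eq_zero_right h.symm

end PartialAdditive

section Cochains

variable {k C H : Type} [CommRing k] [Ring C] [Algebra k C] [Ring H] [Algebra k H]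

lemma d_mul_of_d_eq_zero (𝒜 : ℕ → Submodule k C) [GradedAlgebra 𝒜] (d : C →ₗ[k] C)
    (hleib : ∀ (i : ℕ), ∀ x ∈ 𝒜 i, ∀ y : C, d (x * y) = d x * y + ((-1 : ℤ) ^ i) • (x * d y))
    (u v : C) (hv : d v = 0) : d (u * v) = d u * v := by
  induction u using DirectSum.Decomposition.inductionOn 𝒜 with
  | zero => simp
  | homogeneous w => simp [hleib _ w.1 w.2 v, hv]
  | add u₁ u₂ h₁ h₂ => rw [add_mul, map_add, map_add, h₁, h₂, add_mul]

lemma exists_d_eq_mul_sub_of_section (d : C →ₗ[k] C) (π : C → H) (s : H →ₗ[k] C)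
    (hdmul : ∀ u v : C, d v = 0 → d (u * v) = d u * v)
    (hπadd : ∀ x y : C, d x = 0 → d y = 0 → π (x + y) = π x + π y)
    (hπmul : ∀ x y : C, d x = 0 → d y = 0 → π (x * y) = π x * π y)
    (hπker : ∀ x : C, d x = 0 → (π x = 0 ↔ ∃ y : C, d y = x))
    (hs0 : ∀ h : H, d (s h) = 0) (hsπ : ∀ h : H, π (s h) = h) (a b : H) :
    ∃ y, d y = s a * s b - s (a * b) := by
  have hprod : d (s a * s b) = 0 := by rw [hdmul _ _ (hs0 b), hs0, zero_mul]
  have hneg : d (-s (a * b)) = 0 := by rw [map_neg, hs0, neg_zero]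
  refine (hπker _ (by rw [map_sub, hprod, hs0, sub_zero])).mp ?_
  rw [sub_eq_add_neg, hπadd _ _ hprod hneg, hπmul _ _ (hs0 a) (hs0 b),
    map_neg_of_map_add_on hπadd (map_zero d) (hs0 _) hneg, hsπ, hsπ, hsπ, add_neg_cancel]

end Cochains

section Cone

variable {k C H : Type} [CommRing k] [Ring C] [Algebra k C] [Ring H] [Algebra k H]
  (d : C →ₗ[k] C) (s : H →ₗ[k] C) (c : H) (m : ℕ)

def DconeAddHom : C × C →+ C × C :=
  AddMonoidHom.mk' (Dcone d s c m) fun p r => by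
    ext
    · simp only [Dcone, Prod.fst_add, Prod.snd_add, map_add, mul_add]; abel
    · simp only [Dcone, Prod.snd_add, map_add, smul_add]

lemma Dcone_Dcone (𝒜 : ℕ → Submodule k C) (hd2 : ∀ x : C, d (d x) = 0)
    (hleib : ∀ (i : ℕ), ∀ x ∈ 𝒜 i, ∀ y : C, d (x * y) = d x * y + ((-1 : ℤ) ^ i) • (x * d y))
    (hsc : s c ∈ 𝒜 m) (hsc0 : d (s c) = 0) (p : C × C) :
    Dcone d s c m (Dcone d s c m p) = 0 := by
  -- the Koszul sign `(-1)^m` of `d (s c * v)` cancels the cone sign `(-1)^(m+1)`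
  ext
  · simp only [Dcone, map_add, hd2, zero_add, hleib m (s c) hsc, hsc0, zero_mul, map_zsmul,
      mul_smul_comm, Prod.fst_zero, pow_succ]
    module
  · simp only [Dcone, map_zsmul, hd2, smul_zero, Prod.snd_zero]

lemma Dcone_mul_right_eq_zero (hdmul : ∀ u v : C, d v = 0 → d (u * v) = d u * v) {w : C}
    (hw : d w = 0) {u v : C} (h : Dcone d s c m (u, v) = 0) :
    Dcone d s c m (u * w, v * w) = 0 := by
  simp only [Dcone, Prod.ext_iff, Prod.fst_zero, Prod.snd_zero] at h ⊢
  obtain ⟨h₁, h₂⟩ := h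
  exact ⟨by rw [hdmul _ _ hw, ← mul_assoc, ← add_mul, h₁, zero_mul],
    by rw [hdmul _ _ hw, ← smul_mul_assoc, h₂, zero_mul]⟩

variable {d s c}

lemma Dcone_neg_Qmap (q : C → C) {x : H} (hs0 : d (s x) = 0)
    (hdQ : d (Qmap s q c x) = s c * s x) :
    Dcone d s c m (-(Qmap s q c x), s x) = 0 := by
  simp [Dcone, hdQ, hs0]

lemma cone_defect_eq (q : C → C) (hq0 : q 0 = 0) {x y : H} (hcx : c * x = 0)
    (hdQ : d (Qmap s q x y) = s x * s y - s (x * y)) :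
    ((-(Qmap s q c x)) * s y, s x * s y) - ((-(Qmap s q c (x * y))), s (x * y))
      = ((Theta s q m c x y, 0) : C × C)
        + ((-1 : ℤ) ^ (m + 1)) • Dcone d s c m (0, Qmap s q x y) := by
  have hQ0 : Qmap s q (c * x) y = 0 := by simp [Qmap, hcx, hq0]
  have hsign : ((-1 : ℤ) ^ (m + 1)) * ((-1 : ℤ) ^ (m + 1)) = 1 := by
    rw [← mul_pow]; norm_num
  ext
  · simp only [Theta, Dcone, hQ0, Prod.fst_sub, Prod.fst_add, Prod.smul_fst, map_zero, zero_add,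
      neg_mul, sub_zero]
    module
  · simp only [Dcone, Prod.snd_sub, Prod.snd_add, Prod.smul_snd, hdQ, smul_smul, hsign, one_smul,
      zero_add]

end Cone

lemma cls_sub_eq_of_sub_eq_add_boundary {M N : Type*} [AddCommGroup M] [AddCommGroup N]
    (D : M →+ M) (hDD : ∀ p, D (D p) = 0) (cls : M → N)
    (hadd : ∀ p r, D p = 0 → D r = 0 → cls (p + r) = cls p + cls r)
    (hbdry : ∀ e, cls (D e) = 0) {a b t e : M} (ha : D a = 0) (hb : D b = 0)
    (h : a - b = t + D e) : cls a - cls b = cls t := by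
  have ht : D t = 0 := by
    rw [eq_sub_of_add_eq h.symm, map_sub, map_sub, ha, hb, hDD, sub_zero, sub_zero]
  rw [eq_add_of_sub_eq' h, hadd _ _ hb (by rw [map_add, ht, hDD, add_zero]),
    hadd _ _ ht (hDD e), hbdry, add_zero, add_sub_cancel_left]

theorem cone_section_defect_general (k : Type) [CommRing k]
    (C : Type) [Ring C] [Algebra k C]
    (𝒜 : ℕ → Submodule k C) [GradedAlgebra 𝒜]
    (d : C →ₗ[k] C)
    (hd2 : ∀ x : C, d (d x) = 0)
    (hleib : ∀ (i : ℕ), ∀ x ∈ 𝒜 i, ∀ y : C,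
      d (x * y) = d x * y + ((-1 : ℤ) ^ i) • (x * d y))
    (H : Type) [Ring H] [Algebra k H]
    (ℋ : ℕ → Submodule k H)
    (π : C → H)
    (hπadd : ∀ x y : C, d x = 0 → d y = 0 → π (x + y) = π x + π y)
    (hπmul : ∀ x y : C, d x = 0 → d y = 0 → π (x * y) = π x * π y)
    (hπker : ∀ x : C, d x = 0 → (π x = 0 ↔ ∃ y : C, d y = x))
    (s : H →ₗ[k] C)
    (hs0 : ∀ h : H, d (s h) = 0)
    (hsπ : ∀ h : H, π (s h) = h)
    (hsdeg : ∀ (i : ℕ), ∀ h ∈ ℋ i, s h ∈ 𝒜 i)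
    (q : C → C)
    (hqd : ∀ x : C, (∃ y, d y = x) → d (q x) = x)
    (hqadd : ∀ x y : C, (∃ u, d u = x) → (∃ v, d v = y) → q (x + y) = q x + q y)
    (m : ℕ) (c : H) (hc : c ∈ ℋ m)
    (Hc : Type) [AddCommGroup Hc]
    (πc : C × C → Hc)
    (hπcadd : ∀ p r : C × C, Dcone d s c m p = 0 → Dcone d s c m r = 0 →
      πc (p + r) = πc p + πc r)
    (hπcker : ∀ p : C × C, Dcone d s c m p = 0 → (πc p = 0 ↔ ∃ r, Dcone d s c m r = p))
    (ρ : Hc → H → Hc)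
    (hρ : ∀ (p : C × C) (y : H), Dcone d s c m p = 0 →
      ρ (πc p) y = πc (p.1 * s y, p.2 * s y))
    :
    ∀ (i j : ℕ) (x y : H), x ∈ ℋ i → y ∈ ℋ j → c * x = 0 →
      (((-(Qmap s q c x)) * s y, s x * s y) - ((-(Qmap s q c (x * y))), s (x * y))
          = ((Theta s q m c x y, 0) : C × C)
            + ((-1 : ℤ) ^ (m + 1)) • Dcone d s c m (0, Qmap s q x y)) ∧
      (ρ (πc (-(Qmap s q c x), s x)) y - πc (-(Qmap s q c (x * y)), s (x * y))
          = πc (Theta s q m c x y, 0)) := by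
  intro _ _ x y _ _ hcx
  have hdmul := d_mul_of_d_eq_zero 𝒜 d hleib
  have hdQ (a b : H) : d (Qmap s q a b) = s a * s b - s (a * b) :=
    hqd _ (exists_d_eq_mul_sub_of_section d π s hdmul hπadd hπmul hπker hs0 hsπ a b)
  have hq0 : q 0 = 0 := map_zero_of_map_add_on hqadd ⟨0, map_zero d⟩
  have hDD := Dcone_Dcone d s c m 𝒜 hd2 hleib (hsdeg m c hc) (hs0 c)
  have hcycle {z : H} (hcz : c * z = 0) : Dcone d s c m (-(Qmap s q c z), s z) = 0 :=
    Dcone_neg_Qmap m q (hs0 z) (by rw [hdQ, hcz, map_zero, sub_zero])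
  have hcxy : c * (x * y) = 0 := by rw [← mul_assoc, hcx, zero_mul]
  have key := cone_defect_eq m q hq0 hcx (hdQ x y)
  refine ⟨key, ?_⟩
  rw [hρ _ y (hcycle hcx)]
  refine cls_sub_eq_of_sub_eq_add_boundary (e := ((-1 : ℤ) ^ (m + 1)) • ((0 : C), Qmap s q x y))
    (DconeAddHom d s c m) hDD πc hπcadd (fun e => (hπcker _ (hDD e)).mpr ⟨e, rfl⟩) ?_
    (hcycle hcxy) (by rw [key, map_zsmul]; rfl)
  exact Dcone_mul_right_eq_zero d s c m hdmul (hs0 y) (hcycle hcx)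

/-- For homogeneous `c, x, y ∈ H^*(C)` with `cx = 0`, one has in `cone(l_{s(c)})` the
exact identity
`(-q(c,x), s(x))·s(y) - (-q(c,xy), s(xy)) = (Θ(c,x,y), 0) + (-1)^{|c|-1} D(0, q(x,y))`;
in particular, for the section `σ(x) = [(-q(c,x), s(x))]` of
`H^*(cone(l_{s(c)})) → Ann(c)`, the element `σ(x)y - σ(xy)` is the image of
`θ(c,x,y)` under the map induced by the inclusion `C → cone(l_{s(c)})`. -/
theorem cone_section_defect (k : Type) [CommRing k]
    (C : Type) [Ring C] [Algebra k C]
    (𝒜 : ℕ → Submodule k C) [GradedAlgebra 𝒜]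
    (d : C →ₗ[k] C)
    (hd2 : ∀ x : C, d (d x) = 0)
    (hddeg : ∀ (i : ℕ), ∀ x ∈ 𝒜 i, d x ∈ 𝒜 (i + 1))
    (hleib : ∀ (i : ℕ), ∀ x ∈ 𝒜 i, ∀ y : C,
      d (x * y) = d x * y + ((-1 : ℤ) ^ i) • (x * d y))
    (H : Type) [Ring H] [Algebra k H]
    (ℋ : ℕ → Submodule k H) [GradedAlgebra ℋ]
    (π : C → H)
    (hπadd : ∀ x y : C, d x = 0 → d y = 0 → π (x + y) = π x + π y)
    (hπsmul : ∀ (a : k) (x : C), d x = 0 → π (a • x) = a • π x)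
    (hπmul : ∀ x y : C, d x = 0 → d y = 0 → π (x * y) = π x * π y)
    (hπone : π 1 = 1)
    (hπdeg : ∀ (i : ℕ), ∀ x ∈ 𝒜 i, d x = 0 → π x ∈ ℋ i)
    (hπker : ∀ x : C, d x = 0 → (π x = 0 ↔ ∃ y : C, d y = x))
    (hπsurj : ∀ h : H, ∃ x : C, d x = 0 ∧ π x = h)
    (s : H →ₗ[k] C)
    (hs0 : ∀ h : H, d (s h) = 0)
    (hsπ : ∀ h : H, π (s h) = h)
    (hsdeg : ∀ (i : ℕ), ∀ h ∈ ℋ i, s h ∈ 𝒜 i)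
    (q : C → C)
    (hqd : ∀ x : C, (∃ y, d y = x) → d (q x) = x)
    (hqadd : ∀ x y : C, (∃ u, d u = x) → (∃ v, d v = y) → q (x + y) = q x + q y)
    (hqsmul : ∀ (a : k) (x : C), (∃ y, d y = x) → q (a • x) = a • q x)
    (hqdeg : ∀ (i : ℕ), ∀ x : C, (∃ y, d y = x) → x ∈ 𝒜 (i + 1) → q x ∈ 𝒜 i)
    (m : ℕ) (c : H) (hc : c ∈ ℋ m)
    (Hc : Type) [AddCommGroup Hc] [Module k Hc]
    (πc : C × C → Hc)
    (hπcadd : ∀ p r : C × C, Dcone d s c m p = 0 → Dcone d s c m r = 0 →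
      πc (p + r) = πc p + πc r)
    (hπcsmul : ∀ (a : k) (p : C × C), Dcone d s c m p = 0 → πc (a • p) = a • πc p)
    (hπcker : ∀ p : C × C, Dcone d s c m p = 0 → (πc p = 0 ↔ ∃ r, Dcone d s c m r = p))
    (hπcsurj : ∀ w : Hc, ∃ p : C × C, Dcone d s c m p = 0 ∧ πc p = w)
    (ρ : Hc → H → Hc)
    (hρ : ∀ (p : C × C) (y : H), Dcone d s c m p = 0 →
      ρ (πc p) y = πc (p.1 * s y, p.2 * s y))
    :
    ∀ (i j : ℕ) (x y : H), x ∈ ℋ i → y ∈ ℋ j → c * x = 0 →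
      (((-(Qmap s q c x)) * s y, s x * s y) - ((-(Qmap s q c (x * y))), s (x * y))
          = ((Theta s q m c x y, 0) : C × C)
            + ((-1 : ℤ) ^ (m + 1)) • Dcone d s c m (0, Qmap s q x y)) ∧
      (ρ (πc (-(Qmap s q c x), s x)) y - πc (-(Qmap s q c (x * y)), s (x * y))
          = πc (Theta s q m c x y, 0)) :=
  cone_section_defect_general k C 𝒜 d hd2 hleib H ℋ π hπadd hπmul hπker s hs0 hsπ hsdeg q hqd hqadd
    m c hc Hc πc hπcadd hπcker ρ hρ
end
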